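/- arXiv:2308.01749 — 10 statements merged into one kernel-verified Lean document; each statement's English description precedes it below -/
import Mathlib

section
/- If X has density p(x) = x² φ(x) where φ is the standard normal density, then E[X] = 0, E[X²] = 3, the Laplace transform is L(t) = (1 + t²) exp(t²/2), and L(t) ≤ exp(3t²/2) for all real t; hence X is strictly subgaussian. -/
open MeasureTheory Real Filter
open scoped ENNReal NNReal

noncomputable section

private lemma gauss_int_pow (n : ℕ) :
    Integrable (fun x : ℝ => x ^ n * Real.exp (-x ^ 2 / 2)) := by
  have h := integrable_rpow_mul_exp_neg_mul_sq (b := (1/2 : ℝ)) (by norm_num)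
    (s := (n : ℝ)) (lt_of_lt_of_le (by norm_num) (Nat.cast_nonneg n))
  have : (fun x : ℝ => x ^ (n : ℝ) * Real.exp (-(1/2) * x ^ 2)) =
      fun x : ℝ => x ^ n * Real.exp (-x ^ 2 / 2) := by
    funext x; rw [Real.rpow_natCast]; ring_nf
  rwa [this] at h

private lemma gauss_tendsto_top (n : ℕ) :
    Tendsto (fun x : ℝ => x ^ n * Real.exp (-x ^ 2 / 2)) atTop (nhds 0) := by
  have h := rpow_mul_exp_neg_mul_sq_isLittleO_exp_neg (b := (1/2 : ℝ)) (by norm_num) (n : ℝ)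
  have he : (fun x : ℝ => x ^ (n : ℝ) * Real.exp (-(1/2) * x ^ 2)) =
      fun x : ℝ => x ^ n * Real.exp (-x ^ 2 / 2) := by
    funext x; rw [Real.rpow_natCast]; ring_nf
  rw [he] at h
  have hg : Tendsto (fun x : ℝ => Real.exp (-(1/2) * x)) atTop (nhds 0) := by
    have := Real.tendsto_exp_neg_atTop_nhds_zero.comp (tendsto_id.atTop_div_const
      (by norm_num : (0:ℝ) < 2))
    refine this.congr fun x => ?_
    simp only [Function.comp_apply, id_eq]
    ring_nf
  exact h.trans_tendsto hg

private lemma gauss_tendsto_bot (n : ℕ) :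
    Tendsto (fun x : ℝ => x ^ n * Real.exp (-x ^ 2 / 2)) atBot (nhds 0) := by
  have h : Tendsto (fun y : ℝ => (-y) ^ n * Real.exp (-(-y) ^ 2 / 2)) atTop (nhds 0) := by
    have h2 : Tendsto (fun y : ℝ => (-1 : ℝ) ^ n * (y ^ n * Real.exp (-y ^ 2 / 2)))
        atTop (nhds 0) := by
      simpa using (gauss_tendsto_top n).const_mul ((-1 : ℝ) ^ n)
    refine h2.congr fun y => ?_
    rw [neg_pow y n, neg_sq]
    ring
  have h2 := h.comp tendsto_neg_atBot_atTop
  refine h2.congr fun x => ?_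
  simp [Function.comp]

private lemma gauss_L0 : ∫ x : ℝ, Real.exp (-x ^ 2 / 2) = Real.sqrt (2 * Real.pi) := by
  have h := integral_gaussian (1/2 : ℝ)
  have he : (fun x : ℝ => Real.exp (-(1/2) * x ^ 2)) =
      fun x : ℝ => Real.exp (-x ^ 2 / 2) := by funext x; ring_nf
  rw [he] at h
  rw [h, show Real.pi / (1/2 : ℝ) = 2 * Real.pi by ring]

private lemma gauss_odd (n : ℕ) (hn : Odd n) :
    ∫ x : ℝ, x ^ n * Real.exp (-x ^ 2 / 2) = 0 := by
  have h := integral_neg_eq_self (fun x : ℝ => x ^ n * Real.exp (-x ^ 2 / 2)) volume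
  simp only [hn.neg_pow, neg_sq, neg_mul] at h
  rw [integral_neg] at h
  linarith

private lemma gauss_L2 : ∫ x : ℝ, x ^ 2 * Real.exp (-x ^ 2 / 2) = Real.sqrt (2 * Real.pi) := by
  have hderiv : ∀ x : ℝ, HasDerivAt (fun x : ℝ => -x * Real.exp (-x ^ 2 / 2))
      (x ^ 2 * Real.exp (-x ^ 2 / 2) - 1 * Real.exp (-x ^ 2 / 2)) x := by
    intro x
    have h1 : HasDerivAt (fun x : ℝ => -x ^ 2 / 2) (-x) x := by
      have := ((hasDerivAt_pow 2 x).neg).div_const 2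
      exact this.congr_deriv (by push_cast; ring)
    have h2 := h1.exp
    have h3 := ((hasDerivAt_id x).neg).mul h2
    refine h3.congr_deriv ?_
    simp only [Pi.neg_apply, id_eq]
    ring
  have hint : Integrable (fun x : ℝ => x ^ 2 * Real.exp (-x ^ 2 / 2)
      - 1 * Real.exp (-x ^ 2 / 2)) := by
    have := (gauss_int_pow 2).sub ((gauss_int_pow 0).const_mul 1)
    simpa [Pi.sub_def] using this
  have hbot : Tendsto (fun x : ℝ => -x * Real.exp (-x ^ 2 / 2)) atBot (nhds 0) := by
    have := (gauss_tendsto_bot 1).neg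
    simpa using this
  have htop : Tendsto (fun x : ℝ => -x * Real.exp (-x ^ 2 / 2)) atTop (nhds 0) := by
    have := (gauss_tendsto_top 1).neg
    simpa using this
  have key := integral_of_hasDerivAt_of_tendsto hderiv hint hbot htop
  rw [integral_sub (gauss_int_pow 2) (by simpa using (gauss_int_pow 0).const_mul 1)] at key
  have h0 : ∫ x : ℝ, 1 * Real.exp (-x ^ 2 / 2) = Real.sqrt (2 * Real.pi) := by
    simpa using gauss_L0
  rw [h0] at key
  linarith

private lemma gauss_L4 :
    ∫ x : ℝ, x ^ 4 * Real.exp (-x ^ 2 / 2) = 3 * Real.sqrt (2 * Real.pi) := by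
  have hderiv : ∀ x : ℝ, HasDerivAt (fun x : ℝ => -x ^ 3 * Real.exp (-x ^ 2 / 2))
      (x ^ 4 * Real.exp (-x ^ 2 / 2) - 3 * (x ^ 2 * Real.exp (-x ^ 2 / 2))) x := by
    intro x
    have h1 : HasDerivAt (fun x : ℝ => -x ^ 2 / 2) (-x) x := by
      have := ((hasDerivAt_pow 2 x).neg).div_const 2
      exact this.congr_deriv (by push_cast; ring)
    have h2 := h1.exp
    have h3 := ((hasDerivAt_pow 3 x).neg).mul h2
    refine h3.congr_deriv ?_
    simp only [Pi.neg_apply]; push_cast; ring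
  have hint : Integrable (fun x : ℝ => x ^ 4 * Real.exp (-x ^ 2 / 2)
      - 3 * (x ^ 2 * Real.exp (-x ^ 2 / 2))) :=
    (gauss_int_pow 4).sub ((gauss_int_pow 2).const_mul 3)
  have hbot : Tendsto (fun x : ℝ => -x ^ 3 * Real.exp (-x ^ 2 / 2)) atBot (nhds 0) := by
    have := (gauss_tendsto_bot 3).neg
    simpa using this
  have htop : Tendsto (fun x : ℝ => -x ^ 3 * Real.exp (-x ^ 2 / 2)) atTop (nhds 0) := by
    have := (gauss_tendsto_top 3).neg
    simpa using this
  have key := integral_of_hasDerivAt_of_tendsto hderiv hint hbot htop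
  rw [integral_sub (gauss_int_pow 4) ((gauss_int_pow 2).const_mul 3),
    integral_const_mul, gauss_L2] at key
  linarith

private lemma gauss_shift (t : ℝ) :
    ∫ x : ℝ, x ^ 2 * Real.exp (t * x - x ^ 2 / 2)
      = (1 + t ^ 2) * Real.exp (t ^ 2 / 2) * Real.sqrt (2 * Real.pi) := by
  have he : (fun x : ℝ => x ^ 2 * Real.exp (t * x - x ^ 2 / 2)) =
      fun x : ℝ => Real.exp (t ^ 2 / 2) *
        (((x - t) + t) ^ 2 * Real.exp (-(x - t) ^ 2 / 2)) := by
    funext x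
    rw [show x - t + t = x from by ring, ← mul_assoc,
      mul_comm (Real.exp (t ^ 2 / 2)) (x ^ 2), mul_assoc, ← Real.exp_add]
    congr 1
    ring
  rw [he, integral_const_mul]
  have hshift : ∫ x : ℝ, ((x - t) + t) ^ 2 * Real.exp (-(x - t) ^ 2 / 2)
      = ∫ y : ℝ, (y + t) ^ 2 * Real.exp (-y ^ 2 / 2) :=
    integral_sub_right_eq_self (fun y : ℝ => (y + t) ^ 2 * Real.exp (-y ^ 2 / 2)) t
  rw [hshift]
  have hexpand : (fun y : ℝ => (y + t) ^ 2 * Real.exp (-y ^ 2 / 2)) =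
      fun y : ℝ => y ^ 2 * Real.exp (-y ^ 2 / 2)
        + ((2 * t) * (y ^ 1 * Real.exp (-y ^ 2 / 2))
        + (t ^ 2) * (y ^ 0 * Real.exp (-y ^ 2 / 2))) := by
    funext y; ring
  have e1 : ∫ y : ℝ, (y + t) ^ 2 * Real.exp (-y ^ 2 / 2)
      = (∫ y : ℝ, y ^ 2 * Real.exp (-y ^ 2 / 2))
        + ∫ y : ℝ, ((2 * t) * (y ^ 1 * Real.exp (-y ^ 2 / 2))
            + (t ^ 2) * (y ^ 0 * Real.exp (-y ^ 2 / 2))) := by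
    rw [hexpand]
    exact integral_add (gauss_int_pow 2)
      (((gauss_int_pow 1).const_mul _).add ((gauss_int_pow 0).const_mul _))
  have e2 : ∫ y : ℝ, ((2 * t) * (y ^ 1 * Real.exp (-y ^ 2 / 2))
        + (t ^ 2) * (y ^ 0 * Real.exp (-y ^ 2 / 2)))
      = (∫ y : ℝ, (2 * t) * (y ^ 1 * Real.exp (-y ^ 2 / 2)))
        + ∫ y : ℝ, (t ^ 2) * (y ^ 0 * Real.exp (-y ^ 2 / 2)) :=
    integral_add ((gauss_int_pow 1).const_mul _) ((gauss_int_pow 0).const_mul _)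
  rw [e1, e2, integral_const_mul, integral_const_mul, gauss_L2, gauss_odd 1 (by norm_num)]
  have h0 : ∫ y : ℝ, y ^ 0 * Real.exp (-y ^ 2 / 2) = Real.sqrt (2 * Real.pi) := by
    simpa using gauss_L0
  rw [h0]
  ring

theorem xsq_gaussian_strictly_subgaussian
    (φ : ℝ → ℝ) (hφ : ∀ x, φ x = Real.exp (-x ^ 2 / 2) / Real.sqrt (2 * Real.pi))
    (μ : Measure ℝ)
    (hμ : μ = volume.withDensity (fun x => ENNReal.ofReal (x ^ 2 * φ x))) :
    IsProbabilityMeasure μ ∧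
    (∫ x, x ∂μ = 0) ∧ (∫ x, x ^ 2 ∂μ = 3) ∧
    ∀ t : ℝ, (∫ x, Real.exp (t * x) ∂μ = (1 + t ^ 2) * Real.exp (t ^ 2 / 2)) ∧
      (1 + t ^ 2) * Real.exp (t ^ 2 / 2) ≤ Real.exp (3 * t ^ 2 / 2) := by
  have hφe : φ = fun x => Real.exp (-x ^ 2 / 2) / Real.sqrt (2 * Real.pi) := funext hφ
  subst hφe
  subst hμ
  set c : ℝ := Real.sqrt (2 * Real.pi) with hc
  have hcpos : 0 < c := Real.sqrt_pos.mpr (by positivity)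
  set d : ℝ → ℝ := fun x => x ^ 2 * (Real.exp (-x ^ 2 / 2) / c) with hd
  have hd0 : ∀ x, 0 ≤ d x := fun x => by positivity
  have hdmeas : Measurable d := by fun_prop
  -- reduce integrals against μ to integrals against volume
  have key : ∀ g : ℝ → ℝ,
      ∫ x, g x ∂(volume.withDensity (fun x => ENNReal.ofReal (d x)))
        = ∫ x, d x * g x := by
    intro g
    have : (fun x => ENNReal.ofReal (d x)) =
        fun x => ((Real.toNNReal (d x) : ℝ≥0) : ℝ≥0∞) := rfl
    have hm : Measurable fun x => Real.toNNReal (d x) :=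
      measurable_real_toNNReal.comp hdmeas
    rw [this, integral_withDensity_eq_integral_smul hm g]
    congr 1
    funext x
    simp [NNReal.smul_def, Real.coe_toNNReal _ (hd0 x)]
  have hdint : Integrable d := by
    have : d = fun x => c⁻¹ * (x ^ 2 * Real.exp (-x ^ 2 / 2)) := by
      funext x; rw [hd]; ring
    rw [this]
    exact (gauss_int_pow 2).const_mul _
  have hdtot : ∫ x, d x = 1 := by
    have : d = fun x => c⁻¹ * (x ^ 2 * Real.exp (-x ^ 2 / 2)) := by
      funext x; rw [hd]; ring
    rw [this, integral_const_mul, gauss_L2, ← hc, inv_mul_cancel₀ hcpos.ne']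
  refine ⟨?_, ?_, ?_, ?_⟩
  · constructor
    rw [withDensity_apply _ MeasurableSet.univ, Measure.restrict_univ]
    rw [← ofReal_integral_eq_lintegral_ofReal hdint (Filter.Eventually.of_forall hd0)]
    rw [hdtot, ENNReal.ofReal_one]
  · rw [key]
    have : (fun x => d x * x) = fun x => c⁻¹ * (x ^ 3 * Real.exp (-x ^ 2 / 2)) := by
      funext x; rw [hd]; ring
    rw [this, integral_const_mul, gauss_odd 3 ⟨1, by norm_num⟩, mul_zero]
  · rw [key]
    have : (fun x => d x * x ^ 2) = fun x => c⁻¹ * (x ^ 4 * Real.exp (-x ^ 2 / 2)) := by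
      funext x; rw [hd]; ring
    rw [this, integral_const_mul, gauss_L4, ← hc]
    field_simp
  · intro t
    constructor
    · rw [key]
      have : (fun x => d x * Real.exp (t * x)) =
          fun x => c⁻¹ * (x ^ 2 * Real.exp (t * x - x ^ 2 / 2)) := by
        funext x
        rw [hd]
        simp only [sub_eq_add_neg, Real.exp_add]
        ring
      rw [this, integral_const_mul, gauss_shift, ← hc]
      field_simp
    · have h1 : 1 + t ^ 2 ≤ Real.exp (t ^ 2) := by
        have := Real.add_one_le_exp (t ^ 2)
        linarith
      calc (1 + t ^ 2) * Real.exp (t ^ 2 / 2)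
          ≤ Real.exp (t ^ 2) * Real.exp (t ^ 2 / 2) := by
            apply mul_le_mul_of_nonneg_right h1 (Real.exp_pos _).le
        _ = Real.exp (3 * t ^ 2 / 2) := by rw [← Real.exp_add]; ring_nf
end
end

section
/- Let γ ≥ 0 and α, β ≥ 0. Consider the function f(t) = exp(−t²/2)(1 − α t² + β t⁴) with associated Laplace transform L(t) = exp(t²/2)(1 + α t² + β t⁴). The random variable X with Laplace transform L(t) satisfies L(t) ≤ exp(σ² t²/2) for all t with σ² = 1 + 2α if and only if α ≥ √(2β). -/
lemma aux_exp_lb (x : ℝ) (hx : 0 ≤ x) : 1 + x + x ^ 2 / 2 ≤ Real.exp x := by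
  have h := Real.sum_le_exp_of_nonneg hx 3
  simp [Finset.sum_range_succ, Nat.factorial] at h
  linarith

lemma aux_exp_ub (x : ℝ) (h0 : 0 ≤ x) (h1 : x ≤ 1) :
    Real.exp x ≤ 1 + x + x ^ 2 / 2 + x ^ 3 := by
  have hb := Real.exp_bound (by rw [abs_of_nonneg h0]; exact h1) (by norm_num : 0 < 3)
  rw [abs_of_nonneg h0] at hb
  have hsum : ∑ i ∈ Finset.range 3, x ^ i / (Nat.factorial i : ℝ) = 1 + x + x ^ 2 / 2 := by
    simp [Finset.sum_range_succ, Nat.factorial]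
  rw [hsum] at hb
  have := abs_le.mp hb
  have hcube : x ^ 3 * ((3 + 1 : ℕ) / ((Nat.factorial 3 : ℝ) * 3)) ≤ x ^ 3 := by
    have : ((3 + 1 : ℕ) : ℝ) / ((Nat.factorial 3 : ℝ) * 3) ≤ 1 := by
      norm_num [Nat.factorial]
    nlinarith [pow_nonneg h0 3]
  push_cast at hcube ⊢
  nlinarith [this.2]

theorem strictly_subgaussian_quartic_iff
    (α β : ℝ) (hα : 0 ≤ α) (hβ : 0 ≤ β) :
    (∀ t : ℝ,
        Real.exp (t ^ 2 / 2) * (1 + α * t ^ 2 + β * t ^ 4)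
          ≤ Real.exp ((1 + 2 * α) * t ^ 2 / 2))
      ↔ Real.sqrt (2 * β) ≤ α := by
  have key : ∀ t : ℝ,
      (Real.exp (t ^ 2 / 2) * (1 + α * t ^ 2 + β * t ^ 4)
          ≤ Real.exp ((1 + 2 * α) * t ^ 2 / 2))
        ↔ 1 + α * t ^ 2 + β * t ^ 4 ≤ Real.exp (α * t ^ 2) := by
    intro t
    have hsplit : Real.exp ((1 + 2 * α) * t ^ 2 / 2)
        = Real.exp (t ^ 2 / 2) * Real.exp (α * t ^ 2) := by
      rw [← Real.exp_add]; ring_nf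
    rw [hsplit]
    exact mul_le_mul_iff_right₀ (Real.exp_pos _)
  constructor
  · intro h
    have h2 : 2 * β ≤ α ^ 2 := by
      by_contra hlt
      push_neg at hlt
      set δ := β - α ^ 2 / 2 with hδdef
      have hδ : 0 < δ := by simp [hδdef]; nlinarith
      set s := min (1 / (α + 1)) (δ / (α + 1) ^ 3) with hs
      have hs0 : 0 < s := by
        apply lt_min <;> positivity
      have hs1 : α * s ≤ 1 := by
        have h1 : s ≤ 1 / (α + 1) := min_le_left _ _
        have : α * s ≤ α * (1 / (α + 1)) := by nlinarith
        have h2 : α * (1 / (α + 1)) ≤ 1 := by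
          rw [mul_one_div, div_le_one (by linarith)]; linarith
        linarith
      have hs2 : s ≤ δ / (α + 1) ^ 3 := min_le_right _ _
      set t := Real.sqrt s with ht
      have ht2 : t ^ 2 = s := Real.sq_sqrt hs0.le
      clear_value t
      clear_value s
      clear_value δ
      have ht4 : t ^ 4 = s ^ 2 := by rw [show t ^ 4 = (t ^ 2) ^ 2 by ring, ht2]
      have hcond := (key t).mp (h t)
      rw [ht2, ht4] at hcond
      have hub := aux_exp_ub (α * s) (by positivity) hs1
      -- combine: β s² ≤ α² s²/2 + α³ s³
      have hmain : β * s ^ 2 ≤ α ^ 2 * s ^ 2 / 2 + α ^ 3 * s ^ 3 := by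
        have : s ^ 4 = (s ^ 2) ^ 2 := by ring
        nlinarith [hcond, hub]
      -- δ ≤ α³ s
      have hδs : δ * s ^ 2 ≤ α ^ 3 * s ^ 3 := by
        have : δ * s ^ 2 = β * s ^ 2 - α ^ 2 * s ^ 2 / 2 := by rw [hδdef]; ring
        linarith
      have hδle : δ ≤ α ^ 3 * s := by
        nlinarith [mul_pos hs0 hs0, hδs]
      have hfin : α ^ 3 * s ≤ α ^ 3 * (δ / (α + 1) ^ 3) := by
        apply mul_le_mul_of_nonneg_left hs2 (by positivity)
      have hlt2 : α ^ 3 * (δ / (α + 1) ^ 3) < δ := by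
        rw [mul_div_assoc']
        rw [div_lt_iff₀ (by positivity)]
        nlinarith [hδ, hα]
      nlinarith [hδle, hfin, hlt2]
    calc Real.sqrt (2 * β) ≤ Real.sqrt (α ^ 2) := Real.sqrt_le_sqrt h2
      _ = α := Real.sqrt_sq hα
  · intro h t
    rw [key]
    have h2 : 2 * β ≤ α ^ 2 := by
      have := Real.sq_sqrt (by positivity : (0:ℝ) ≤ 2 * β)
      nlinarith [Real.sqrt_nonneg (2 * β)]
    have hlb := aux_exp_lb (α * t ^ 2) (by positivity)
    nlinarith [sq_nonneg (t ^ 2), sq_nonneg t, mul_nonneg (mul_nonneg hβ (sq_nonneg t)) (sq_nonneg t)]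
end

section
/- For real parameters α and β, the function p(x) = ((1 − α + 3β) + (α − 6β)x² + β x⁴) φ(x), where φ is the standard normal density, is a probability density (nonnegative with total integral 1) if and only if either (i) 0 ≤ β ≤ 1/3 and 4β − 2√(β(1−2β)) ≤ α ≤ 3β + 1, or (ii) 1/3 ≤ β ≤ 1/2 and 4β − 2√(β(1−2β)) ≤ α ≤ 4β + 2√(β(1−2β)). -/
open MeasureTheory


lemma qdc_integrable_pow (n : ℕ) :
    Integrable (fun x : ℝ => x ^ n * Real.exp (-(1/2 : ℝ) * x ^ 2)) := by
  have hn : (-1 : ℝ) < (n : ℝ) := lt_of_lt_of_le (by norm_num) (Nat.cast_nonneg n)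
  simpa [Real.rpow_natCast] using
    integrable_rpow_mul_exp_neg_mul_sq (by norm_num : (0:ℝ) < 1/2) hn

lemma qdc_tendsto (n : ℕ) :
    Filter.Tendsto (fun x : ℝ => x ^ n * Real.exp (-(1/2 : ℝ) * x ^ 2)) (Filter.cocompact ℝ)
      (nhds 0) := by
  have h := tendsto_rpow_abs_mul_exp_neg_mul_sq_cocompact (by norm_num : (0:ℝ) < 1/2) n
  refine squeeze_zero_norm (fun x => ?_) h
  rw [Real.norm_eq_abs, abs_mul, abs_pow, abs_of_pos (Real.exp_pos _), Real.rpow_natCast]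

lemma qdc_deriv (n : ℕ) (x : ℝ) :
    HasDerivAt (fun x : ℝ => x ^ (n+1) * Real.exp (-(1/2 : ℝ) * x ^ 2))
      ((n+1 : ℝ) * x ^ n * Real.exp (-(1/2 : ℝ) * x ^ 2)
        - x ^ (n+2) * Real.exp (-(1/2 : ℝ) * x ^ 2)) x := by
  have h1 : HasDerivAt (fun x : ℝ => -(1/2 : ℝ) * x ^ 2) (-(1/2 : ℝ) * (2 * x ^ 1)) x :=
    (hasDerivAt_pow 2 x).const_mul _
  have h2 := h1.exp
  have h3 : HasDerivAt (fun x : ℝ => x ^ (n+1) * Real.exp (-(1/2 : ℝ) * x ^ 2)) _ x :=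
    (hasDerivAt_pow (n+1) x).mul h2
  convert h3 using 1
  push_cast
  ring

lemma qdc_key (n : ℕ) :
    ∫ x : ℝ, ((n+1 : ℝ) * x ^ n * Real.exp (-(1/2 : ℝ) * x ^ 2)
        - x ^ (n+2) * Real.exp (-(1/2 : ℝ) * x ^ 2)) = 0 := by
  have hint : Integrable (fun x : ℝ => (n+1 : ℝ) * x ^ n * Real.exp (-(1/2 : ℝ) * x ^ 2)
      - x ^ (n+2) * Real.exp (-(1/2 : ℝ) * x ^ 2)) := by
    have h1 := ((qdc_integrable_pow n).const_mul ((n:ℝ)+1)).sub (qdc_integrable_pow (n+2))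
    refine h1.congr (Filter.Eventually.of_forall fun x => by simp [Pi.sub_apply]; ring)
  have hbot : Filter.Tendsto (fun x : ℝ => x ^ (n+1) * Real.exp (-(1/2 : ℝ) * x ^ 2))
      Filter.atBot (nhds 0) :=
    (qdc_tendsto (n+1)).mono_left (by rw [cocompact_eq_atBot_atTop]; exact le_sup_left)
  have htop : Filter.Tendsto (fun x : ℝ => x ^ (n+1) * Real.exp (-(1/2 : ℝ) * x ^ 2))
      Filter.atTop (nhds 0) :=
    (qdc_tendsto (n+1)).mono_left (by rw [cocompact_eq_atBot_atTop]; exact le_sup_right)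
  simpa using integral_of_hasDerivAt_of_tendsto (qdc_deriv n) hint hbot htop

lemma qdc_step (n : ℕ) :
    ∫ x : ℝ, x ^ (n+2) * Real.exp (-(1/2 : ℝ) * x ^ 2)
      = (n+1 : ℝ) * ∫ x : ℝ, x ^ n * Real.exp (-(1/2 : ℝ) * x ^ 2) := by
  have hint1 : Integrable (fun x : ℝ => (n+1 : ℝ) * (x ^ n * Real.exp (-(1/2 : ℝ) * x ^ 2))) :=
    (qdc_integrable_pow n).const_mul _
  have h := qdc_key n
  simp_rw [mul_assoc] at h
  rw [integral_sub hint1 (qdc_integrable_pow (n+2)), integral_const_mul] at h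
  linarith

lemma qdc_int0 : ∫ x : ℝ, x ^ 0 * Real.exp (-(1/2 : ℝ) * x ^ 2) = Real.sqrt (2 * Real.pi) := by
  simp only [pow_zero, one_mul]
  rw [integral_gaussian, show Real.pi / (1/2 : ℝ) = 2 * Real.pi by ring]

lemma qdc_int2 : ∫ x : ℝ, x ^ 2 * Real.exp (-(1/2 : ℝ) * x ^ 2) = Real.sqrt (2 * Real.pi) := by
  have h := qdc_step 0
  rw [qdc_int0] at h
  rw [show ((0:ℕ)+2 : ℕ) = 2 from rfl] at h
  rw [h]
  norm_num

lemma qdc_int4 : ∫ x : ℝ, x ^ 4 * Real.exp (-(1/2 : ℝ) * x ^ 2) = 3 * Real.sqrt (2 * Real.pi) := by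
  have h := qdc_step 2
  rw [qdc_int2] at h
  rw [show ((2:ℕ)+2 : ℕ) = 4 from rfl] at h
  rw [h]
  norm_num

lemma qdc_integral (c b a : ℝ) :
    ∫ x : ℝ, (c + b * x ^ 2 + a * x ^ 4) * (Real.exp (-x ^ 2 / 2) / Real.sqrt (2 * Real.pi))
      = c + b + 3 * a := by
  have hs : (0:ℝ) < Real.sqrt (2 * Real.pi) := Real.sqrt_pos.mpr (by positivity)
  have heq : ∀ x : ℝ, (c + b * x ^ 2 + a * x ^ 4) * (Real.exp (-x ^ 2 / 2) / Real.sqrt (2 * Real.pi))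
      = (c * (x ^ 0 * Real.exp (-(1/2 : ℝ) * x ^ 2)) + b * (x ^ 2 * Real.exp (-(1/2 : ℝ) * x ^ 2))
        + a * (x ^ 4 * Real.exp (-(1/2 : ℝ) * x ^ 2))) * (Real.sqrt (2 * Real.pi))⁻¹ := by
    intro x
    rw [show -x ^ 2 / 2 = -(1/2 : ℝ) * x ^ 2 by ring]
    field_simp
  have hi0 : Integrable (fun x : ℝ => c * (x ^ 0 * Real.exp (-(1/2 : ℝ) * x ^ 2))) :=
    (qdc_integrable_pow 0).const_mul c
  have hi2 : Integrable (fun x : ℝ => b * (x ^ 2 * Real.exp (-(1/2 : ℝ) * x ^ 2))) :=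
    (qdc_integrable_pow 2).const_mul b
  have hi4 : Integrable (fun x : ℝ => a * (x ^ 4 * Real.exp (-(1/2 : ℝ) * x ^ 2))) :=
    (qdc_integrable_pow 4).const_mul a
  have hi02 : Integrable (fun x : ℝ => c * (x ^ 0 * Real.exp (-(1/2 : ℝ) * x ^ 2))
      + b * (x ^ 2 * Real.exp (-(1/2 : ℝ) * x ^ 2))) := hi0.add hi2
  simp_rw [heq]
  rw [integral_mul_const, integral_add hi02 hi4, integral_add hi0 hi2,
    integral_const_mul, integral_const_mul, integral_const_mul, qdc_int0, qdc_int2, qdc_int4]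
  field_simp


lemma qdc_quad (c b a : ℝ) :
    (∀ y : ℝ, 0 ≤ y → 0 ≤ c + b * y + a * y ^ 2)
      ↔ (0 ≤ a ∧ 0 ≤ c ∧ (0 ≤ b ∨ b ^ 2 ≤ 4 * a * c)) := by
  constructor
  · intro h
    have hc : 0 ≤ c := by simpa using h 0 le_rfl
    have ha : 0 ≤ a := by
      by_contra ha
      push_neg at ha
      set y := max 1 ((|b| + |c| + 1) / (-a)) with hy
      have hy1 : (1:ℝ) ≤ y := le_max_left _ _
      have hy2 : (|b| + |c| + 1) / (-a) ≤ y := le_max_right _ _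
      have hy2' : |b| + |c| + 1 ≤ (-a) * y := by
        rw [div_le_iff₀ (by linarith)] at hy2
        linarith [hy2]
      have h0 := h y (by linarith)
      nlinarith [le_abs_self b, neg_abs_le b, le_abs_self c, abs_nonneg b, abs_nonneg c,
        mul_le_mul_of_nonneg_right hy2' (by linarith : (0:ℝ) ≤ y),
        mul_le_mul_of_nonneg_right (le_abs_self b) (by linarith : (0:ℝ) ≤ y),
        mul_le_mul_of_nonneg_right (neg_abs_le b) (by linarith : (0:ℝ) ≤ y)]
    refine ⟨ha, hc, ?_⟩
    by_cases hb : 0 ≤ b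
    · exact Or.inl hb
    push_neg at hb
    right
    rcases eq_or_lt_of_le ha with ha0 | ha0
    · exfalso
      have h0 := h ((|c| + 1) / (-b)) (div_nonneg (by positivity) (by linarith))
      rw [← ha0] at h0
      have hb' : b ≠ 0 := ne_of_lt hb
      have heq : b * ((|c| + 1) / (-b)) = -(|c| + 1) := by
        rw [mul_div_assoc', mul_comm, mul_div_assoc, div_neg, div_self hb']
        ring
      nlinarith [le_abs_self c, heq]
    · have h0 := h (-b / (2 * a)) (div_nonneg (by linarith) (by linarith))
      have h4a : (0:ℝ) < 4 * a := by linarith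
      have heq : c + b * (-b / (2 * a)) + a * (-b / (2 * a)) ^ 2 = c - b ^ 2 / (4 * a) := by
        field_simp
        ring
      rw [heq, sub_nonneg, div_le_iff₀ h4a] at h0
      linarith [h0]
  · rintro ⟨ha, hc, hb | hb⟩ y hy
    · have := mul_nonneg hb hy
      have := mul_nonneg ha (sq_nonneg y)
      linarith
    · rcases eq_or_lt_of_le ha with ha0 | ha0
      · have hb0 : b = 0 := by nlinarith [sq_nonneg b]
        rw [hb0, ← ha0]
        simpa using hc
      · nlinarith [sq_nonneg (2 * a * y + b), mul_nonneg ha0.le (sq_nonneg y)]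


lemma qdc_alg (α β : ℝ) :
    (0 ≤ β ∧ 0 ≤ 1 - α + 3 * β ∧
      (0 ≤ α - 6 * β ∨ (α - 6 * β) ^ 2 ≤ 4 * β * (1 - α + 3 * β)))
      ↔ ((0 ≤ β ∧ β ≤ 1 / 3 ∧
            4 * β - 2 * Real.sqrt (β * (1 - 2 * β)) ≤ α ∧ α ≤ 3 * β + 1) ∨
          (1 / 3 ≤ β ∧ β ≤ 1 / 2 ∧
            4 * β - 2 * Real.sqrt (β * (1 - 2 * β)) ≤ α ∧
            α ≤ 4 * β + 2 * Real.sqrt (β * (1 - 2 * β)))) := by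
  set t := Real.sqrt (β * (1 - 2 * β)) with ht
  have htn : 0 ≤ t := Real.sqrt_nonneg _
  constructor
  · rintro ⟨hβ, hc, hb | hdisc⟩
    · -- b ≥ 0 case: 6β ≤ α ≤ 3β+1, so β ≤ 1/3
      left
      refine ⟨hβ, by linarith, by linarith, by linarith⟩
    · -- discriminant case
      have hkey : (α - 4 * β) ^ 2 ≤ 4 * (β * (1 - 2 * β)) := by nlinarith [hdisc]
      have hnn : 0 ≤ β * (1 - 2 * β) := by nlinarith [sq_nonneg (α - 4 * β)]
      have ht2 : t ^ 2 = β * (1 - 2 * β) := Real.sq_sqrt hnn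
      have habs : -(2 * t) ≤ α - 4 * β ∧ α - 4 * β ≤ 2 * t := by
        refine abs_le_of_sq_le_sq' ?_ (by linarith)
        rw [mul_pow, ht2]; nlinarith [hkey]
      by_cases h3 : β ≤ 1 / 3
      · exact Or.inl ⟨hβ, h3, by linarith [habs.1], by linarith⟩
      · push_neg at h3
        have hβ2 : β ≤ 1 / 2 := by nlinarith [hnn]
        exact Or.inr ⟨h3.le, hβ2, by linarith [habs.1], by linarith [habs.2]⟩
  · rintro (⟨hβ, h3, hl, hu⟩ | ⟨h3, h2, hl, hu⟩)
    · have hnn : 0 ≤ β * (1 - 2 * β) := by nlinarith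
      have ht2 : t ^ 2 = β * (1 - 2 * β) := Real.sq_sqrt hnn
      refine ⟨hβ, by linarith, ?_⟩
      by_cases hb : 0 ≤ α - 6 * β
      · exact Or.inl hb
      · push_neg at hb
        right
        have htβ : β ≤ t := by
          nlinarith [ht2, htn, sq_nonneg (t - β)]
        have h1 : α - 4 * β ≤ 2 * t := by linarith
        have h2' : -(2 * t) ≤ α - 4 * β := by linarith
        nlinarith [ht2]
    · have hβ : 0 ≤ β := by linarith
      have hnn : 0 ≤ β * (1 - 2 * β) := by nlinarith
      have ht2 : t ^ 2 = β * (1 - 2 * β) := Real.sq_sqrt hnn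
      have hc : 0 ≤ 1 - α + 3 * β := by
        -- need 2t ≤ 1 - β
        have h2t : 2 * t ≤ 1 - β := by
          have hsq : (2 * t) ^ 2 ≤ (1 - β) ^ 2 := by
            rw [mul_pow, ht2]; nlinarith [sq_nonneg (3 * β - 1)]
          have := abs_le_of_sq_le_sq' hsq (by linarith)
          exact this.2
        linarith
      refine ⟨hβ, hc, Or.inr ?_⟩
      have h1 : α - 4 * β ≤ 2 * t := by linarith
      have h2' : -(2 * t) ≤ α - 4 * β := by linarith
      nlinarith [ht2]

theorem quartic_density_characterization
    (α β : ℝ)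
    (φ : ℝ → ℝ) (hφ : ∀ x, φ x = Real.exp (-x ^ 2 / 2) / Real.sqrt (2 * Real.pi))
    (p : ℝ → ℝ)
    (hp : ∀ x, p x = ((1 - α + 3 * β) + (α - 6 * β) * x ^ 2 + β * x ^ 4) * φ x) :
    ((∀ x, 0 ≤ p x) ∧ ∫ x, p x = 1)
      ↔ ((0 ≤ β ∧ β ≤ 1 / 3 ∧
            4 * β - 2 * Real.sqrt (β * (1 - 2 * β)) ≤ α ∧ α ≤ 3 * β + 1) ∨
          (1 / 3 ≤ β ∧ β ≤ 1 / 2 ∧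
            4 * β - 2 * Real.sqrt (β * (1 - 2 * β)) ≤ α ∧
            α ≤ 4 * β + 2 * Real.sqrt (β * (1 - 2 * β)))) := by
  have hφpos : ∀ x, 0 < φ x := fun x => by
    rw [hφ]
    have := Real.pi_pos
    positivity
  have hpe : p = fun x => ((1 - α + 3 * β) + (α - 6 * β) * x ^ 2 + β * x ^ 4) *
      (Real.exp (-x ^ 2 / 2) / Real.sqrt (2 * Real.pi)) :=
    funext fun x => by rw [hp x, hφ x]
  have hint : ∫ x, p x = 1 := by
    rw [hpe, qdc_integral]
    ring
  constructor
  · rintro ⟨hpos, -⟩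
    refine (qdc_alg α β).mp ?_
    refine (qdc_quad (1 - α + 3 * β) (α - 6 * β) β).mp ?_
    intro y hy
    have hx := hpos (Real.sqrt y)
    rw [hp] at hx
    have h2 : Real.sqrt y ^ 2 = y := Real.sq_sqrt hy
    have h4 : Real.sqrt y ^ 4 = y ^ 2 := by
      rw [show (4:ℕ) = 2 * 2 from rfl, pow_mul, h2]
    rw [h2, h4] at hx
    have hpos' := hφpos (Real.sqrt y)
    exact nonneg_of_mul_nonneg_right (by linarith [hx] : 0 ≤ φ (Real.sqrt y) * (1 - α + 3 * β + (α - 6 * β) * y + β * y ^ 2)) hpos'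
  · intro hR
    have hq := (qdc_quad (1 - α + 3 * β) (α - 6 * β) β).mpr ((qdc_alg α β).mpr hR)
    refine ⟨fun x => ?_, hint⟩
    rw [hp]
    have h := hq (x ^ 2) (sq_nonneg x)
    rw [show x ^ 4 = (x ^ 2) ^ 2 by ring]
    exact mul_nonneg (by linarith) (hφpos x).le
end

section
/- For α, β ≥ 0, the function Q(t) = log(1 + αt + βt²) is concave on [0, ∞) if and only if α ≥ √(2β); moreover when α ≥ √(2β), the function R(t) = αt − Q(t) is convex and nondecreasing on [0, ∞). -/
open Set

lemma aux_hasDerivP (α β : ℝ) (t : ℝ) :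
    HasDerivAt (fun s : ℝ => 1 + α * s + β * s ^ 2) (α + 2 * β * t) t := by
  have h1 : HasDerivAt (fun s : ℝ => s) 1 t := hasDerivAt_id t
  have h := ((h1.const_mul α).const_add 1).add ((hasDerivAt_pow 2 t).const_mul β)
  refine h.congr_deriv ?_
  norm_num
  ring

lemma aux_concave (α β : ℝ) (hα : 0 ≤ α) (hβ : 0 ≤ β) (h : 2 * β ≤ α ^ 2) :
    ConcaveOn ℝ (Ici (0 : ℝ)) (fun t => Real.log (1 + α * t + β * t ^ 2)) := by
  set p : ℝ → ℝ := fun t => 1 + α * t + β * t ^ 2 with hpdef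
  set U : Set ℝ := {t : ℝ | 0 < p t} with hUdef
  have hUopen : IsOpen U := isOpen_lt continuous_const (by fun_prop)
  have hmemU : ∀ t : ℝ, 0 ≤ t → t ∈ U := by
    intro t ht
    simp only [hUdef, hpdef, mem_setOf_eq]
    nlinarith
  have hQd : ∀ t ∈ U, HasDerivAt (fun s => Real.log (p s))
      ((α + 2 * β * t) / p t) t := by
    intro t ht
    exact (aux_hasDerivP α β t).log (ne_of_gt ht)
  have hderiv : ∀ t ∈ U, deriv (fun s => Real.log (p s)) t = (α + 2 * β * t) / p t :=
    fun t ht => (hQd t ht).deriv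
  have hIsub : Ioi (0:ℝ) ⊆ U := fun t ht => hmemU t (le_of_lt ht)
  have hcont : ContinuousOn (fun t => Real.log (p t)) (Ici (0:ℝ)) := by
    apply ContinuousOn.log (by fun_prop)
    intro t ht
    exact ne_of_gt (hmemU t ht)
  have hdiff : DifferentiableOn ℝ (fun t => Real.log (p t)) (interior (Ici (0:ℝ))) := by
    rw [interior_Ici]
    intro t ht
    exact ((hQd t (hIsub ht)).differentiableAt).differentiableWithinAt
  -- second derivative
  have hg : ∀ x ∈ U, HasDerivAt (fun t => (α + 2 * β * t) / p t)
      ((2 * β * p x - (α + 2 * β * x) * (α + 2 * β * x)) / (p x) ^ 2) x := by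
    intro x hx
    have hnum : HasDerivAt (fun s : ℝ => α + 2 * β * s) (2 * β) x := by
      simpa using ((hasDerivAt_id x).const_mul (2 * β)).const_add α
    exact hnum.div (aux_hasDerivP α β x) (ne_of_gt hx)
  have hEq : ∀ x ∈ U, deriv (fun s => Real.log (p s)) =ᶠ[nhds x]
      (fun t => (α + 2 * β * t) / p t) := by
    intro x hx
    filter_upwards [hUopen.mem_nhds hx] with t ht using hderiv t ht
  have hderiv2 : ∀ x ∈ U, deriv (deriv (fun s => Real.log (p s))) x
      = (2 * β * p x - (α + 2 * β * x) * (α + 2 * β * x)) / (p x) ^ 2 := by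
    intro x hx
    rw [(hEq x hx).deriv_eq]
    exact (hg x hx).deriv
  apply concaveOn_of_deriv2_nonpos (convex_Ici 0) hcont hdiff
  · rw [interior_Ici]
    intro x hx
    have hx' := hIsub hx
    apply DifferentiableAt.differentiableWithinAt
    exact (hEq x hx').differentiableAt_iff.mpr (hg x hx').differentiableAt
  · rw [interior_Ici]
    intro x hx
    have hx' := hIsub hx
    have hx0 : (0:ℝ) ≤ x := le_of_lt hx
    simp only [Function.iterate_succ, Function.iterate_zero, Function.comp_apply, id]
    rw [hderiv2 x hx']
    apply div_nonpos_of_nonpos_of_nonneg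
    · simp only [hpdef]
      nlinarith [mul_nonneg (mul_nonneg hα hβ) hx0,
        mul_nonneg (mul_nonneg hβ hβ) (mul_nonneg hx0 hx0)]
    · positivity

theorem log_quadratic_concavity
    (α β : ℝ) (hα : 0 ≤ α) (hβ : 0 ≤ β)
    (Q R : ℝ → ℝ)
    (hQ : ∀ t, Q t = Real.log (1 + α * t + β * t ^ 2))
    (hR : ∀ t, R t = α * t - Q t) :
    (ConcaveOn ℝ (Ici (0 : ℝ)) Q ↔ Real.sqrt (2 * β) ≤ α) ∧
    (Real.sqrt (2 * β) ≤ α → ConvexOn ℝ (Ici (0 : ℝ)) R ∧ MonotoneOn R (Ici (0 : ℝ))) := by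
  have hQfun : Q = fun t => Real.log (1 + α * t + β * t ^ 2) := funext hQ
  have hsq_iff : Real.sqrt (2 * β) ≤ α ↔ 2 * β ≤ α ^ 2 := by
    rw [Real.sqrt_le_left hα]
  have hppos : ∀ t : ℝ, 0 ≤ t → (0:ℝ) < 1 + α * t + β * t ^ 2 := by
    intro t ht; nlinarith
  constructor
  · constructor
    · -- concave → sqrt(2β) ≤ α
      intro hconc
      rw [hsq_iff]
      by_contra hlt
      push_neg at hlt
      have hβpos : 0 < β := by nlinarith
      set c : ℝ := 2 * β - α ^ 2 with hc
      have hcpos : 0 < c := by simp [hc]; nlinarith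
      set t : ℝ := min 1 (c / (2 * α * β + β ^ 2 + c)) with ht
      have hden : 0 < 2 * α * β + β ^ 2 + c := by positivity
      have htpos : 0 < t := lt_min one_pos (by positivity)
      have ht1 : t ≤ 1 := min_le_left _ _
      have ht2 : t ≤ c / (2 * α * β + β ^ 2 + c) := min_le_right _ _
      have hkey : (2 * α * β + β ^ 2) * t < c := by
        have h1 : (2 * α * β + β ^ 2) * t ≤ (2 * α * β + β ^ 2) * (c / (2*α*β + β^2 + c)) := by
          apply mul_le_mul_of_nonneg_left ht2 (by positivity)
        have h2 : (2 * α * β + β ^ 2) * (c / (2*α*β + β^2 + c)) < c := by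
          rw [← mul_div_assoc, div_lt_iff₀ hden]
          nlinarith [mul_pos hcpos hcpos]
        linarith
      -- p(t)^2 < p(2t)
      have hsqt : β^2*t^2 ≤ β^2*t := by
        nlinarith [mul_nonneg (mul_nonneg hβ hβ) htpos.le]
      have haux : 2*α*β*t + β^2*t^2 < c := by nlinarith
      have hfac : 0 < t^2 * (c - 2*α*β*t - β^2*t^2) :=
        mul_pos (by positivity) (by linarith)
      rw [hc] at hfac
      have hpoly : (1 + α * t + β * t ^ 2) ^ 2 < 1 + α * (2*t) + β * (2*t) ^ 2 := by
        nlinarith [hfac]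
      have h0 : (0:ℝ) ∈ Ici (0:ℝ) := self_mem_Ici
      have h2t : (2*t) ∈ Ici (0:ℝ) := by simp; linarith
      have hcomb := hconc.2 h0 h2t (by norm_num : (0:ℝ) ≤ 1/2) (by norm_num : (0:ℝ) ≤ 1/2)
        (by norm_num)
      simp only [smul_eq_mul] at hcomb
      have hmid : (1:ℝ)/2 * 0 + 1/2 * (2*t) = t := by ring
      rw [hmid] at hcomb
      have hQ0 : Q 0 = 0 := by rw [hQ]; norm_num
      rw [hQ0] at hcomb
      have hQt : Q t = Real.log (1 + α * t + β * t ^ 2) := hQ t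
      have hQ2t : Q (2*t) = Real.log (1 + α * (2*t) + β * (2*t) ^ 2) := hQ (2*t)
      rw [hQt, hQ2t] at hcomb
      have hpt : (0:ℝ) < 1 + α * t + β * t ^ 2 := hppos t (le_of_lt htpos)
      have hp2t : (0:ℝ) < 1 + α * (2*t) + β * (2*t) ^ 2 := hppos _ (by linarith)
      have hlog : Real.log (1 + α * (2*t) + β * (2*t) ^ 2)
          ≤ Real.log ((1 + α * t + β * t ^ 2) ^ 2) := by
        rw [Real.log_pow]
        push_cast
        linarith
      have := (Real.log_le_log_iff hp2t (by positivity)).mp hlog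
      linarith
    · intro hsq
      rw [hQfun]
      exact aux_concave α β hα hβ (hsq_iff.mp hsq)
  · intro hsq
    have h2β : 2 * β ≤ α ^ 2 := hsq_iff.mp hsq
    have hconc := aux_concave α β hα hβ h2β
    constructor
    · have hRfun : R = fun t => α * t + -(Real.log (1 + α * t + β * t ^ 2)) := by
        funext t; rw [hR t, hQ t]; ring
      rw [hRfun]
      apply ConvexOn.add _ hconc.neg
      exact (convexOn_id (convex_Ici 0)).smul hα
    · -- monotonicity
      have hRd : ∀ t : ℝ, 0 < t → HasDerivAt R
          (α - (α + 2 * β * t) / (1 + α * t + β * t ^ 2)) t := by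
        intro t ht
        have hp : (0:ℝ) < 1 + α * t + β * t ^ 2 := hppos t (le_of_lt ht)
        have h1 : HasDerivAt (fun s : ℝ => α * s) α t := by
          simpa using (hasDerivAt_id t).const_mul α
        have h2 : HasDerivAt Q ((α + 2 * β * t) / (1 + α * t + β * t ^ 2)) t := by
          rw [hQfun]
          exact (aux_hasDerivP α β t).log (ne_of_gt hp)
        have hR2 : R = fun s => α * s - Q s := funext hR
        rw [hR2]
        exact h1.sub h2
      apply monotoneOn_of_deriv_nonneg (convex_Ici 0)
      · have : ContinuousOn Q (Ici (0:ℝ)) := by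
          rw [hQfun]
          apply ContinuousOn.log (by fun_prop)
          intro t ht; exact ne_of_gt (hppos t ht)
        have : ContinuousOn (fun t => α * t - Q t) (Ici (0:ℝ)) :=
          (continuousOn_const.mul continuousOn_id).sub this
        convert this using 1
        funext t; rw [hR t]
      · rw [interior_Ici]
        intro t ht
        exact (hRd t ht).differentiableAt.differentiableWithinAt
      · rw [interior_Ici]
        intro t ht
        rw [(hRd t ht).deriv]
        have hp : (0:ℝ) < 1 + α * t + β * t ^ 2 := hppos t (le_of_lt ht)
        have ht' : (0:ℝ) < t := ht
        rw [sub_nonneg, div_le_iff₀ hp]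
        nlinarith [mul_nonneg (mul_nonneg hα hβ) (mul_nonneg ht'.le ht'.le),
          mul_le_mul_of_nonneg_right h2β ht'.le]
end

section
/- Let X be a random variable whose distribution has density p(x) = q(x)φ(x) where φ is the standard normal density and q is a nonnegative measurable h-periodic function (q(x+h) = q(x) for all x). Then for every integer m, E[exp(m h X)] = exp((mh)²/2). -/
open MeasureTheory

theorem periodic_class_laplace_at_lattice
    (h : ℝ) (hh : 0 < h)
    (φ : ℝ → ℝ) (hφ : ∀ x, φ x = Real.exp (-x ^ 2 / 2) / Real.sqrt (2 * Real.pi))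
    (q : ℝ → ℝ) (hqmeas : Measurable q) (hq0 : ∀ x, 0 ≤ q x)
    (hper : ∀ x, q (x + h) = q x)
    (hdens : ∫ x, q x * φ x = 1)
    (hint1 : Integrable (fun x => q x * φ x)) :
    ∀ m : ℤ,
      ∫ x, Real.exp ((m : ℝ) * h * x) * (q x * φ x)
        = Real.exp (((m : ℝ) * h) ^ 2 / 2) := by
  intro m
  set c : ℝ := (m : ℝ) * h with hc
  have hper' : Function.Periodic q h := hper
  have hqc : ∀ x, q (x + c) = q x := by
    intro x
    have := (hper'.int_mul m) x
    simpa [hc, mul_comm] using this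
  have key : ∀ x, Real.exp (c * x) * (q x * φ x)
      = Real.exp (c ^ 2 / 2) * (q x * φ (x - c)) := by
    intro x
    have e : Real.exp (c * x) * Real.exp (-x ^ 2 / 2)
        = Real.exp (c ^ 2 / 2) * Real.exp (-(x - c) ^ 2 / 2) := by
      rw [← Real.exp_add, ← Real.exp_add]; congr 1; ring
    rw [hφ x, hφ (x - c)]
    calc Real.exp (c * x) * (q x * (Real.exp (-x ^ 2 / 2) / Real.sqrt (2 * Real.pi)))
        = (Real.exp (c * x) * Real.exp (-x ^ 2 / 2)) * (q x / Real.sqrt (2 * Real.pi)) := by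
          ring
      _ = (Real.exp (c ^ 2 / 2) * Real.exp (-(x - c) ^ 2 / 2)) * (q x / Real.sqrt (2 * Real.pi)) := by
          rw [e]
      _ = Real.exp (c ^ 2 / 2) * (q x * (Real.exp (-(x - c) ^ 2 / 2) / Real.sqrt (2 * Real.pi))) := by
          ring
  simp_rw [key]
  rw [integral_const_mul]
  have shift : ∫ x, q x * φ (x - c) = ∫ x, q x * φ x := by
    have := integral_add_right_eq_self (μ := volume) (fun x => q x * φ (x - c)) c
    simp only [add_sub_cancel_right, hqc] at this
    rw [← this]
  rw [shift, hdens, mul_one]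
end

section
/- Let X have density p = qφ with q nonnegative, h-periodic, and E[X] = 0. Then the Laplace transform L(t) = E[exp(tX)] is finite for all real t and satisfies L(t) ≤ exp((|t| + h)²/2) for all t ∈ ℝ. -/
open MeasureTheory

theorem periodic_class_laplace_bound
    (h : ℝ) (hh : 0 < h)
    (φ : ℝ → ℝ) (hφ : ∀ x, φ x = Real.exp (-x ^ 2 / 2) / Real.sqrt (2 * Real.pi))
    (q : ℝ → ℝ) (hqmeas : Measurable q) (hq0 : ∀ x, 0 ≤ q x)
    (hper : ∀ x, q (x + h) = q x)
    (hdens : ∫ x, q x * φ x = 1)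
    (hmean : ∫ x, x * (q x * φ x) = 0) :
    ∀ t : ℝ,
      Integrable (fun x => Real.exp (t * x) * (q x * φ x)) ∧
      ∫ x, Real.exp (t * x) * (q x * φ x) ≤ Real.exp ((|t| + h) ^ 2 / 2) := by
  have hφmeas : Measurable φ := by
    have : φ = fun x => Real.exp (-x ^ 2 / 2) / Real.sqrt (2 * Real.pi) := funext hφ
    rw [this]; fun_prop
  have hpmeas : Measurable (fun x => q x * φ x) := hqmeas.mul hφmeas
  have hφnonneg : ∀ x, 0 ≤ φ x := fun x => by rw [hφ]; positivity
  have hpnonneg : ∀ x, 0 ≤ q x * φ x := fun x => mul_nonneg (hq0 x) (hφnonneg x)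
  have hpint : Integrable (fun x => q x * φ x) := by
    by_contra hcon
    rw [integral_undef hcon] at hdens; norm_num at hdens
  -- key: for s an integer multiple of the period, L(s) = exp(s²/2)
  have key : ∀ s : ℝ, (∀ y, q (y + s) = q y) →
      Integrable (fun x => Real.exp (s * x) * (q x * φ x)) ∧
      ∫ x, Real.exp (s * x) * (q x * φ x) = Real.exp (s ^ 2 / 2) := by
    intro s hs
    have heq : (fun x => Real.exp (s * x) * (q x * φ x))
        = fun x => Real.exp (s ^ 2 / 2) * (q (x - s) * φ (x - s)) := by
      funext x
      have hq' : q (x - s) = q x := by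
        have := hs (x - s); rw [sub_add_cancel] at this; exact this.symm
      have hexp : Real.exp (s * x) * Real.exp (-x ^ 2 / 2)
          = Real.exp (s ^ 2 / 2) * Real.exp (-(x - s) ^ 2 / 2) := by
        rw [← Real.exp_add, ← Real.exp_add]; congr 1; ring
      rw [hφ, hφ, hq']
      calc Real.exp (s * x) * (q x * (Real.exp (-x ^ 2 / 2) / Real.sqrt (2 * Real.pi)))
          = q x * (Real.exp (s * x) * Real.exp (-x ^ 2 / 2)) / Real.sqrt (2 * Real.pi) := by
            ring
        _ = q x * (Real.exp (s ^ 2 / 2) * Real.exp (-(x - s) ^ 2 / 2)) /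
              Real.sqrt (2 * Real.pi) := by rw [hexp]
        _ = Real.exp (s ^ 2 / 2) *
              (q x * (Real.exp (-(x - s) ^ 2 / 2) / Real.sqrt (2 * Real.pi))) := by ring
    constructor
    · rw [heq]
      exact (hpint.comp_sub_right s).const_mul _
    · rw [heq]
      rw [integral_const_mul, integral_sub_right_eq_self (fun x => q x * φ x) s, hdens, mul_one]
  intro t
  rcases eq_or_ne t 0 with ht0 | ht0
  · subst ht0
    constructor
    · simpa using hpint
    · simp only [zero_mul, Real.exp_zero, one_mul, hdens]
      exact Real.one_le_exp (by positivity)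
  -- t ≠ 0
  set n : ℕ := ⌈|t| / h⌉₊ with hn
  have habs : 0 < |t| := abs_pos.mpr ht0
  have hnpos : 0 < (n : ℝ) := by
    have : (0 : ℕ) < n := Nat.ceil_pos.mpr (by positivity)
    exact_mod_cast this
  have hle1 : |t| ≤ n * h := by
    rw [← div_le_iff₀ hh]
    exact Nat.le_ceil _
  have hle2 : (n : ℝ) * h ≤ |t| + h := by
    have : (n : ℝ) < |t| / h + 1 := Nat.ceil_lt_add_one (by positivity)
    have := mul_le_mul_of_nonneg_right this.le hh.le
    calc (n : ℝ) * h ≤ (|t| / h + 1) * h := this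
      _ = |t| + h := by field_simp
  set ε : ℝ := if 0 ≤ t then 1 else -1 with hε
  have hεt : ε * t = |t| := by
    rw [hε]; split_ifs with hsgn
    · rw [one_mul, abs_of_nonneg hsgn]
    · rw [abs_of_neg (lt_of_not_ge hsgn)]; ring
  have hε2 : ε * ε = 1 := by rw [hε]; split_ifs <;> norm_num
  set m : ℤ := if 0 ≤ t then (n : ℤ) else -(n : ℤ) with hm
  set s : ℝ := (m : ℝ) * h with hs
  have hsε : s = ε * ((n : ℝ) * h) := by
    rw [hs, hm, hε]; split_ifs <;> push_cast <;> ring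
  have hper' : ∀ y, q (y + s) = q y := by
    intro y
    exact (Function.Periodic.int_mul hper m) y
  obtain ⟨hgint, hgval⟩ := key s hper'
  have hs2 : s ^ 2 = ((n : ℝ) * h) ^ 2 := by
    rw [hsε]; nlinarith [hε2]
  set r : ℝ := |t| / ((n : ℝ) * h) with hr
  have hnh : 0 < (n : ℝ) * h := by positivity
  have hr0 : 0 ≤ r := by positivity
  have hr1 : r ≤ 1 := by
    rw [hr, div_le_one hnh]; exact hle1
  have hts : t = r * s := by
    rw [hr, hsε]
    field_simp
    linear_combination ε * hεt - t * hε2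
  -- pointwise convexity bound
  have hpt : ∀ x, Real.exp (t * x) ≤ (1 - r) * 1 + r * Real.exp (s * x) := by
    intro x
    have hcvx := convexOn_exp.2 (Set.mem_univ (0 : ℝ)) (Set.mem_univ (s * x))
      (by linarith : (0:ℝ) ≤ 1 - r) hr0 (by ring)
    simp only [smul_eq_mul] at hcvx
    calc Real.exp (t * x) = Real.exp ((1 - r) * 0 + r * (s * x)) := by
          congr 1; rw [hts]; ring
      _ ≤ (1 - r) * Real.exp 0 + r * Real.exp (s * x) := hcvx
      _ = (1 - r) * 1 + r * Real.exp (s * x) := by rw [Real.exp_zero]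
  -- dominating function
  set g : ℝ → ℝ := fun x => (1 - r) * (q x * φ x) + r * (Real.exp (s * x) * (q x * φ x))
    with hg
  have hgint' : Integrable g := (hpint.const_mul (1 - r)).add (hgint.const_mul r)
  have hfg : ∀ x, Real.exp (t * x) * (q x * φ x) ≤ g x := by
    intro x
    have := mul_le_mul_of_nonneg_right (hpt x) (hpnonneg x)
    calc Real.exp (t * x) * (q x * φ x)
        ≤ ((1 - r) * 1 + r * Real.exp (s * x)) * (q x * φ x) := this
      _ = g x := by rw [hg]; ring
  have hfint : Integrable (fun x => Real.exp (t * x) * (q x * φ x)) := by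
    apply Integrable.mono' hgint'
      ((Measurable.aestronglyMeasurable (by fun_prop :
        Measurable fun x => Real.exp (t * x) * (q x * φ x))))
    filter_upwards with x
    rw [Real.norm_eq_abs, abs_of_nonneg (mul_nonneg (Real.exp_nonneg _) (hpnonneg x))]
    exact hfg x
  refine ⟨hfint, ?_⟩
  have hE1 : 1 ≤ Real.exp (s ^ 2 / 2) := Real.one_le_exp (by positivity)
  calc ∫ x, Real.exp (t * x) * (q x * φ x)
      ≤ ∫ x, g x := integral_mono hfint hgint' hfg
    _ = (1 - r) * 1 + r * Real.exp (s ^ 2 / 2) := by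
        rw [hg, integral_add (hpint.const_mul _) (hgint.const_mul _),
          integral_const_mul, integral_const_mul, hdens, hgval]
    _ ≤ Real.exp (s ^ 2 / 2) := by nlinarith
    _ ≤ Real.exp ((|t| + h) ^ 2 / 2) := by
        apply Real.exp_le_exp.mpr
        rw [hs2]
        have : ((n : ℝ) * h) ^ 2 ≤ (|t| + h) ^ 2 := by nlinarith
        linarith
end

section
/- Let X have density p = qφ with q nonnegative and h-periodic. Then the function Ψ(t) = E[exp(tX)]·exp(−t²/2) is h-periodic on ℝ: Ψ(t + h) = Ψ(t) for all t. -/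
open MeasureTheory

theorem periodic_class_psi_periodic
    (h : ℝ) (hh : 0 < h)
    (φ : ℝ → ℝ) (hφ : ∀ x, φ x = Real.exp (-x ^ 2 / 2) / Real.sqrt (2 * Real.pi))
    (q : ℝ → ℝ) (hqmeas : Measurable q) (hq0 : ∀ x, 0 ≤ q x)
    (hper : ∀ x, q (x + h) = q x)
    (hdens : ∫ x, q x * φ x = 1)
    (hint : ∀ t : ℝ, Integrable (fun x => Real.exp (t * x) * (q x * φ x)))
    (Ψ : ℝ → ℝ)
    (hΨ : ∀ t, Ψ t = (∫ x, Real.exp (t * x) * (q x * φ x)) * Real.exp (-t ^ 2 / 2)) :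
    ∀ t : ℝ, Ψ (t + h) = Ψ t := by
  intro t
  rw [hΨ, hΨ]
  have key : (∫ x, Real.exp ((t + h) * x) * (q x * φ x))
      = Real.exp (t * h + h ^ 2 / 2) * ∫ x, Real.exp (t * x) * (q x * φ x) := by
    rw [← MeasureTheory.integral_add_right_eq_self
        (fun x => Real.exp ((t + h) * x) * (q x * φ x)) h,
      ← integral_const_mul]
    congr 1
    funext x
    simp only [hper, hφ]
    have e : Real.exp ((t + h) * (x + h)) * Real.exp (-(x + h) ^ 2 / 2)
        = Real.exp (t * h + h ^ 2 / 2) * (Real.exp (t * x) * Real.exp (-x ^ 2 / 2)) := by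
      rw [← Real.exp_add, ← Real.exp_add, ← Real.exp_add]
      congr 1
      ring
    have hs : Real.sqrt (2 * Real.pi) ≠ 0 := by positivity
    linear_combination q x / Real.sqrt (2 * Real.pi) * e
  rw [key]
  have e2 : Real.exp (t * h + h ^ 2 / 2) * Real.exp (-(t + h) ^ 2 / 2) = Real.exp (-t ^ 2 / 2) := by
    rw [← Real.exp_add]; congr 1; ring
  linear_combination (∫ x, Real.exp (t * x) * (q x * φ x)) * e2
end

section
/- Let X1, X2 be independent with common density p = qφ where q is h-periodic. Then Z = (X1 + X2)/√2 has density p2 = q2 φ where q2 is h√2-periodic; explicitly q2(x) = π^{−1/2} ∫ q(x/√2 + z) q(x/√2 − z) e^{−z²} dz. -/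
open MeasureTheory

theorem periodic_class_convolution
    (h : ℝ) (hh : 0 < h)
    (φ : ℝ → ℝ) (hφ : ∀ x, φ x = Real.exp (-x ^ 2 / 2) / Real.sqrt (2 * Real.pi))
    (q : ℝ → ℝ) (hqmeas : Measurable q) (hq0 : ∀ x, 0 ≤ q x)
    (hper : ∀ x, q (x + h) = q x)
    (p : ℝ → ℝ) (hp : ∀ x, p x = q x * φ x)
    (hdens : ∫ x, p x = 1)
    (q2 : ℝ → ℝ)
    (hq2 : ∀ x, q2 x = (Real.sqrt Real.pi)⁻¹ *
      ∫ z, q (x / Real.sqrt 2 + z) * q (x / Real.sqrt 2 - z) * Real.exp (-z ^ 2)) :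
    (∀ x, Real.sqrt 2 * ∫ y, p (x * Real.sqrt 2 - y) * p y = q2 x * φ x) ∧
    (∀ x, q2 (x + h * Real.sqrt 2) = q2 x) := by
  have hs0 : (0:ℝ) < Real.sqrt 2 := by positivity
  have hsne : Real.sqrt 2 ≠ 0 := ne_of_gt hs0
  have hs2 : Real.sqrt 2 ^ 2 = 2 := Real.sq_sqrt (by norm_num)
  have hπ : (0:ℝ) < Real.pi := Real.pi_pos
  have hπs : Real.sqrt Real.pi ^ 2 = Real.pi := Real.sq_sqrt hπ.le
  have hπs0 : (0:ℝ) < Real.sqrt Real.pi := Real.sqrt_pos.mpr hπ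
  have h2π : Real.sqrt (2 * Real.pi) = Real.sqrt 2 * Real.sqrt Real.pi :=
    Real.sqrt_mul (by norm_num) _
  constructor
  · intro x
    set s := Real.sqrt 2 with hsdef
    set c := x / s with hcdef
    have hx : x = s * c := by rw [hcdef]; field_simp
    have hsc : s * c = x := by rw [hcdef]; field_simp
    have E : ℝ := Real.exp (-x ^ 2 / 2)
    -- pointwise rewriting of the integrand
    have key : ∀ y : ℝ, p (x * s - y) * p y =
        (Real.exp (-x ^ 2 / 2) / (2 * Real.pi)) *
          (q (2 * c - y) * q y * Real.exp (-(y - c) ^ 2)) := by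
      intro y
      have hxs : x * s = 2 * c := by
        linear_combination (-s) * hsc + c * hs2
      rw [hp, hp, hφ, hφ, hxs]
      have hexp : -(2 * c - y) ^ 2 / 2 + -y ^ 2 / 2 = -x ^ 2 / 2 + -(y - c) ^ 2 := by
        linear_combination (-(s * c + x) / 2) * hsc + (c ^ 2 / 2) * hs2
      have hsq : Real.sqrt (2 * Real.pi) * Real.sqrt (2 * Real.pi) = 2 * Real.pi :=
        Real.mul_self_sqrt (by positivity)
      have hE : Real.exp (-(2 * c - y) ^ 2 / 2) * Real.exp (-y ^ 2 / 2) =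
          Real.exp (-x ^ 2 / 2) * Real.exp (-(y - c) ^ 2) := by
        rw [← Real.exp_add, ← Real.exp_add, hexp]
      rw [h2π]
      field_simp
      simp only [neg_div] at hE ⊢
      linear_combination (q (2 * c - y) * q y * (2 * Real.pi)) * hE
        + (-(q (2 * c - y) * q y * Real.exp (-(x ^ 2 / 2)) * Real.exp (-(y - c) ^ 2)
            * Real.sqrt Real.pi ^ 2)) * hs2
        + (-(2 * q (2 * c - y) * q y * Real.exp (-(x ^ 2 / 2)) * Real.exp (-(y - c) ^ 2))) * hπs
    rw [integral_congr_ae (Filter.Eventually.of_forall key),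
      integral_const_mul]
    -- substitution y ↦ y + c
    have hsub : (∫ y, q (2 * c - y) * q y * Real.exp (-(y - c) ^ 2)) =
        ∫ z, q (c + z) * q (c - z) * Real.exp (-z ^ 2) := by
      rw [← MeasureTheory.integral_add_right_eq_self
        (fun y => q (2 * c - y) * q y * Real.exp (-(y - c) ^ 2)) c]
      apply integral_congr_ae
      apply Filter.Eventually.of_forall
      intro z
      have h1 : 2 * c - (z + c) = c - z := by ring
      have h2 : z + c = c + z := by ring
      have h3 : z + c - c = z := by ring
      beta_reduce
      rw [h1, h3, h2, mul_comm (q (c - z)) (q (c + z))]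
    rw [hsub, hq2, hφ, h2π, ← hcdef]
    set I := ∫ z, q (c + z) * q (c - z) * Real.exp (-z ^ 2) with hI
    field_simp
    ring_nf
    linear_combination (I * Real.sqrt Real.pi ^ 2) * hs2
      + (2 * I) * hπs
  · intro x
    rw [hq2, hq2]
    congr 1
    apply integral_congr_ae
    apply Filter.Eventually.of_forall
    intro z
    have hc : (x + h * Real.sqrt 2) / Real.sqrt 2 = x / Real.sqrt 2 + h := by
      field_simp
    have h1 : x / Real.sqrt 2 + h + z = x / Real.sqrt 2 + z + h := by ring
    have h2 : x / Real.sqrt 2 + h - z = x / Real.sqrt 2 - z + h := by ring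
    simp only [hc, h1, h2, hper]
end

section
/- Let P(t) = a₀ + ∑_{k≥1}(a_k cos(kt) + b_k sin(kt)) with ∑_{k≥1} e^{k²/2}(|a_k| + |b_k|) < ∞, satisfying P(0) = P'(0) = P''(0) = 0. Then for |c| small enough, the function q(x) = φ(x)[1 − c(a₀ + ∑_{k≥1} e^{k²/2}(a_k cos(kx) + b_k sin(kx)))] is a probability density whose Laplace transform equals (1 − cP(t))·exp(t²/2), and the corresponding random variable X has E[X] = 0 and E[X²] = 1. -/
open MeasureTheory

open Filter Complex

noncomputable def gw (z : ℂ) (x : ℝ) : ℂ := Complex.exp (z * x - x ^ 2 / 2)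

lemma gw_norm (z : ℂ) (x : ℝ) : ‖gw z x‖ = Real.exp (z.re * x - x ^ 2 / 2) := by
  rw [gw, Complex.norm_exp]
  congr 1
  have : ((x:ℂ) ^ 2 / 2) = ((x ^ 2 / 2 : ℝ) : ℂ) := by push_cast; ring
  rw [this, Complex.sub_re, Complex.ofReal_re, Complex.mul_re, Complex.ofReal_re,
    Complex.ofReal_im]
  ring

lemma gw_integrable (z : ℂ) : Integrable (gw z) := by
  have h := integrable_cexp_quadratic' (b := -(1/2 : ℂ)) (by norm_num) z 0
  refine h.congr ?_
  filter_upwards with x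
  rw [gw]
  congr 1
  ring

lemma gw_integral (z : ℂ) :
    ∫ x : ℝ, gw z x = Real.sqrt (2 * Real.pi) * Complex.exp (z ^ 2 / 2) := by
  have h := integral_cexp_quadratic (b := -(1/2 : ℂ)) (by norm_num) z 0
  have e1 : ∀ x : ℝ, gw z x = Complex.exp (-(1/2 : ℂ) * x ^ 2 + z * x + 0) := by
    intro x; rw [gw]; congr 1; ring
  simp_rw [e1]
  rw [h]
  congr 1
  · rw [show ((Real.pi : ℂ) / -(-(1/2 : ℂ))) = ((2 * Real.pi : ℝ) : ℂ) by push_cast; ring,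
      Real.sqrt_eq_rpow, Complex.ofReal_cpow (by positivity : (0:ℝ) ≤ 2 * Real.pi) (1/2)]
    norm_num
  · congr 1; field_simp; ring

lemma abs_le_exp_add (n : ℕ) (x : ℝ) :
    |x| ^ n ≤ Real.exp ((n : ℝ) * x) + Real.exp (-((n : ℝ) * x)) := by
  have h0 : |x| ≤ Real.exp |x| := by linarith [Real.add_one_le_exp |x|]
  have h1 : |x| ^ n ≤ Real.exp ((n : ℝ) * |x|) := by
    calc |x| ^ n ≤ Real.exp |x| ^ n := pow_le_pow_left₀ (abs_nonneg x) h0 n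
      _ = Real.exp ((n : ℝ) * |x|) := by rw [← Real.exp_nat_mul]
  refine h1.trans ?_
  rcases abs_cases x with ⟨h, _⟩ | ⟨h, _⟩ <;> rw [h]
  · nlinarith [Real.exp_pos (-((n:ℝ)*x))]
  · rw [mul_neg, ← neg_mul]
    nlinarith [Real.exp_pos ((n:ℝ)*x)]

lemma pow_mul_gw_integrable (n : ℕ) (z : ℂ) :
    Integrable (fun x : ℝ => (x : ℂ) ^ n * gw z x) := by
  refine Integrable.mono ((gw_integrable (z + n)).norm.add (gw_integrable (z - n)).norm)
    ?_ ?_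
  · exact (Continuous.mul (by continuity) (by
      unfold gw
      exact Complex.continuous_exp.comp (by continuity))).aestronglyMeasurable
  · filter_upwards with x
    have hb := abs_le_exp_add n x
    have key : ‖(x:ℂ) ^ n * gw z x‖
        ≤ Real.exp ((z.re + n) * x - x ^ 2 / 2) + Real.exp ((z.re - n) * x - x ^ 2 / 2) := by
      rw [norm_mul, norm_pow, Complex.norm_real, Real.norm_eq_abs, gw_norm]
      have e1 : Real.exp ((z.re + n) * x - x ^ 2 / 2)
          = Real.exp ((n:ℝ) * x) * Real.exp (z.re * x - x ^ 2 / 2) := by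
        rw [← Real.exp_add]; ring_nf
      have e2 : Real.exp ((z.re - n) * x - x ^ 2 / 2)
          = Real.exp (-((n:ℝ) * x)) * Real.exp (z.re * x - x ^ 2 / 2) := by
        rw [← Real.exp_add]; ring_nf
      rw [e1, e2, ← add_mul]
      exact mul_le_mul_of_nonneg_right hb (Real.exp_pos _).le
    refine key.trans (le_of_eq ?_)
    show _ = ‖(‖gw (z + ↑n) x‖ + ‖gw (z - ↑n) x‖)‖
    rw [Real.norm_of_nonneg (by positivity), gw_norm, gw_norm]
    simp

lemma gw_tendsto_atTop (n : ℕ) (z : ℂ) :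
    Tendsto (fun x : ℝ => (x : ℂ) ^ n * gw z x) atTop (nhds 0) := by
  apply squeeze_zero_norm' (a := fun x : ℝ => x ^ n * Real.exp (-x))
  · filter_upwards [eventually_ge_atTop (max 1 (2 * z.re + 2))] with x hx
    have hx1 : (1:ℝ) ≤ x := le_trans (le_max_left _ _) hx
    have hx2 : 2 * z.re + 2 ≤ x := le_trans (le_max_right _ _) hx
    rw [norm_mul, norm_pow, Complex.norm_real, Real.norm_eq_abs, gw_norm,
      _root_.abs_of_nonneg (by linarith : (0:ℝ) ≤ x)]
    apply mul_le_mul_of_nonneg_left _ (by positivity)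
    apply Real.exp_le_exp.mpr
    nlinarith
  · simpa using Real.tendsto_pow_mul_exp_neg_atTop_nhds_zero n

lemma gw_tendsto_atBot (n : ℕ) (z : ℂ) :
    Tendsto (fun x : ℝ => (x : ℂ) ^ n * gw z x) atBot (nhds 0) := by
  have h : (fun x : ℝ => (x : ℂ) ^ n * gw z x)
      = (fun y : ℝ => (-1 : ℂ) ^ n * ((y : ℂ) ^ n * gw (-z) y)) ∘ (fun x : ℝ => -x) := by
    funext x
    simp only [Function.comp_apply, Complex.ofReal_neg, gw, ← mul_assoc, ← mul_pow]
    norm_num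
  rw [h]
  have := ((gw_tendsto_atTop n (-z)).const_mul ((-1 : ℂ) ^ n)).comp tendsto_neg_atBot_atTop
  simpa using this

lemma gw_hasDerivAt (z : ℂ) (x : ℝ) :
    HasDerivAt (fun y : ℝ => gw z y) ((z - x) * gw z x) x := by
  have h : HasDerivAt (fun w : ℂ => Complex.exp (z * w - w ^ 2 / 2))
      ((z - x) * Complex.exp (z * x - (x:ℂ) ^ 2 / 2)) (x : ℝ) := by
    have hd : HasDerivAt (fun w : ℂ => z * w - w ^ 2 / 2) (z - x) (x : ℝ) := by
      have h1 : HasDerivAt (fun w : ℂ => z * w) z (x : ℝ) := by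
        simpa using (hasDerivAt_id (x : ℂ)).const_mul z
      have h2 : HasDerivAt (fun w : ℂ => w ^ 2 / 2) ((x : ℂ)) (x : ℝ) := by
        have := (hasDerivAt_pow 2 (x : ℂ)).div_const 2
        simpa using this
      exact h1.sub h2
    simpa [mul_comm] using hd.cexp
  exact h.comp_ofReal

lemma gw_integral1 (z : ℂ) :
    ∫ x : ℝ, (x : ℂ) * gw z x = Real.sqrt (2 * Real.pi) * z * Complex.exp (z ^ 2 / 2) := by
  have hint : Integrable (fun x : ℝ => (z - x) * gw z x) := by
    have h1 := (gw_integrable z).const_mul z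
    have h2 := pow_mul_gw_integrable 1 z
    simp only [pow_one] at h2
    exact (h1.sub h2).congr (by filter_upwards with x; simp only [Pi.sub_apply, Pi.add_apply]; ring)
  have h0 : (∫ x : ℝ, (z - x) * gw z x) = 0 - 0 := by
    refine integral_of_hasDerivAt_of_tendsto (f := gw z) (fun x => gw_hasDerivAt z x) hint
      ?_ ?_
    · simpa using gw_tendsto_atBot 0 z
    · simpa using gw_tendsto_atTop 0 z
  rw [sub_zero] at h0
  have hsplit : (∫ x : ℝ, (z - x) * gw z x)
      = z * (∫ x : ℝ, gw z x) - ∫ x : ℝ, (x : ℂ) * gw z x := by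
    rw [← integral_const_mul, ← integral_sub ((gw_integrable z).const_mul z)]
    · congr 1; funext x; ring
    · simpa using pow_mul_gw_integrable 1 z
  rw [hsplit] at h0
  rw [gw_integral z] at h0
  have := sub_eq_zero.mp h0
  rw [← this]; ring

lemma gw_integral2 (z : ℂ) :
    ∫ x : ℝ, (x : ℂ) ^ 2 * gw z x
      = Real.sqrt (2 * Real.pi) * (1 + z ^ 2) * Complex.exp (z ^ 2 / 2) := by
  have hd : ∀ x : ℝ, HasDerivAt (fun y : ℝ => (y : ℂ) * gw z y)
      (gw z x + (x : ℂ) * ((z - x) * gw z x)) x := by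
    intro x
    have h1 : HasDerivAt (fun y : ℝ => (y : ℂ)) 1 x := by
      simpa using (hasDerivAt_id (x : ℂ)).comp_ofReal
    have := h1.mul (gw_hasDerivAt z x)
    rw [one_mul] at this
    exact this
  have hint : Integrable (fun x : ℝ => gw z x + (x : ℂ) * ((z - x) * gw z x)) := by
    have h0 := gw_integrable z
    have h1 := (pow_mul_gw_integrable 1 z).const_mul z
    have h2 := pow_mul_gw_integrable 2 z
    simp only [pow_one] at h1
    exact ((h0.add h1).sub h2).congr (by filter_upwards with x; simp only [Pi.sub_apply, Pi.add_apply]; ring)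
  have h0 : (∫ x : ℝ, (gw z x + (x : ℂ) * ((z - x) * gw z x))) = 0 - 0 := by
    refine integral_of_hasDerivAt_of_tendsto hd hint ?_ ?_
    · simpa using gw_tendsto_atBot 1 z
    · simpa using gw_tendsto_atTop 1 z
  rw [sub_zero] at h0
  have hsplit : (∫ x : ℝ, (gw z x + (x : ℂ) * ((z - x) * gw z x)))
      = ((∫ x : ℝ, gw z x) + z * ∫ x : ℝ, (x : ℂ) * gw z x) - ∫ x : ℝ, (x : ℂ) ^ 2 * gw z x := by
    have e : ∀ x : ℝ, gw z x + (x : ℂ) * ((z - x) * gw z x)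
        = (gw z x + z * ((x : ℂ) * gw z x)) - (x : ℂ) ^ 2 * gw z x := by intro x; ring
    simp_rw [e]
    rw [integral_sub, integral_add (gw_integrable z), integral_const_mul]
    · exact ((pow_mul_gw_integrable 1 z).const_mul z).congr (by filter_upwards with x; ring)
    · have h1 := (pow_mul_gw_integrable 1 z).const_mul z
      simp only [pow_one] at h1
      exact ((gw_integrable z).add h1)
    · exact pow_mul_gw_integrable 2 z
  rw [hsplit, gw_integral z, gw_integral1 z] at h0
  have := sub_eq_zero.mp h0
  rw [← this]; ring

lemma cexp_decomp (r θ : ℝ) : Complex.exp ((r : ℂ) + (θ : ℂ) * I)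
    = ((Real.exp r * Real.cos θ : ℝ) : ℂ) + ((Real.exp r * Real.sin θ : ℝ) : ℂ) * I := by
  rw [Complex.exp_add, Complex.exp_mul_I, ← Complex.ofReal_exp, ← Complex.ofReal_cos,
    ← Complex.ofReal_sin]
  push_cast
  ring

lemma gw_apply (t l x : ℝ) : gw ((t : ℂ) + (l : ℂ) * I) x
    = Complex.exp (((t * x - x ^ 2 / 2 : ℝ) : ℂ) + ((l * x : ℝ) : ℂ) * I) := by
  rw [gw]; congr 1; push_cast; ring

lemma sq_decomp (t l : ℝ) : ((t : ℂ) + (l : ℂ) * I) ^ 2 / 2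
    = (((t ^ 2 - l ^ 2) / 2 : ℝ) : ℂ) + ((t * l : ℝ) : ℂ) * I := by
  push_cast
  linear_combination ((l : ℂ) ^ 2 / 2) * Complex.I_sq

lemma re_AB (A B : ℝ) : ((A : ℂ) + (B : ℂ) * I).re = A := by simp

lemma im_AB (A B : ℝ) : ((A : ℂ) + (B : ℂ) * I).im = B := by simp

lemma mul_AB_re (c A B : ℝ) : ((c : ℂ) * ((A : ℂ) + (B : ℂ) * I)).re = c * A := by
  rw [show ((c : ℂ)) * ((A : ℂ) + (B : ℂ) * I) = ((c * A : ℝ) : ℂ) + ((c * B : ℝ) : ℂ) * I by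
    push_cast; ring, re_AB]

lemma mul_AB_im (c A B : ℝ) : ((c : ℂ) * ((A : ℂ) + (B : ℂ) * I)).im = c * B := by
  rw [show ((c : ℂ)) * ((A : ℂ) + (B : ℂ) * I) = ((c * A : ℝ) : ℂ) + ((c * B : ℝ) : ℂ) * I by
    push_cast; ring, im_AB]

lemma integral_cre {f : ℝ → ℂ} (hf : Integrable f) :
    (∫ x : ℝ, (f x).re) = (∫ x : ℝ, f x).re := integral_re hf

lemma integral_cim {f : ℝ → ℂ} (hf : Integrable f) :
    (∫ x : ℝ, (f x).im) = (∫ x : ℝ, f x).im := integral_im hf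

lemma Gcos (t l : ℝ) : ∫ x : ℝ, Real.exp (t * x - x ^ 2 / 2) * Real.cos (l * x)
    = Real.sqrt (2 * Real.pi) * (Real.exp ((t ^ 2 - l ^ 2) / 2) * Real.cos (t * l)) := by
  have h1 : ∫ x : ℝ, Real.exp (t * x - x ^ 2 / 2) * Real.cos (l * x)
      = ∫ x : ℝ, (gw ((t : ℂ) + (l : ℂ) * I) x).re := by
    congr 1; funext x; rw [gw_apply, cexp_decomp, re_AB]
  rw [h1, integral_cre (gw_integrable _), gw_integral, sq_decomp, cexp_decomp, mul_AB_re]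

lemma Gsin (t l : ℝ) : ∫ x : ℝ, Real.exp (t * x - x ^ 2 / 2) * Real.sin (l * x)
    = Real.sqrt (2 * Real.pi) * (Real.exp ((t ^ 2 - l ^ 2) / 2) * Real.sin (t * l)) := by
  have h1 : ∫ x : ℝ, Real.exp (t * x - x ^ 2 / 2) * Real.sin (l * x)
      = ∫ x : ℝ, (gw ((t : ℂ) + (l : ℂ) * I) x).im := by
    congr 1; funext x; rw [gw_apply, cexp_decomp, im_AB]
  rw [h1, integral_cim (gw_integrable _), gw_integral, sq_decomp, cexp_decomp, mul_AB_im]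

lemma xmul_re (x : ℝ) (w : ℂ) : ((x : ℂ) * w).re = x * w.re := by
  simp [Complex.mul_re]

lemma xmul_im (x : ℝ) (w : ℂ) : ((x : ℂ) * w).im = x * w.im := by
  simp [Complex.mul_im]

lemma G1cos (t l : ℝ) : ∫ x : ℝ, x * (Real.exp (t * x - x ^ 2 / 2) * Real.cos (l * x))
    = (Real.sqrt (2 * Real.pi) * ((t : ℂ) + (l : ℂ) * I)
        * Complex.exp (((t : ℂ) + (l : ℂ) * I) ^ 2 / 2)).re := by
  have h1 : ∫ x : ℝ, x * (Real.exp (t * x - x ^ 2 / 2) * Real.cos (l * x))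
      = ∫ x : ℝ, ((x : ℂ) * gw ((t : ℂ) + (l : ℂ) * I) x).re := by
    congr 1; funext x; rw [xmul_re, gw_apply, cexp_decomp, re_AB]
  have hi : Integrable (fun x : ℝ => (x : ℂ) * gw ((t : ℂ) + (l : ℂ) * I) x) := by
    have := pow_mul_gw_integrable 1 ((t : ℂ) + (l : ℂ) * I)
    simpa using this
  have h2 := gw_integral1 ((t : ℂ) + (l : ℂ) * I)
  rw [h1, integral_cre hi, h2]

lemma G1sin (t l : ℝ) : ∫ x : ℝ, x * (Real.exp (t * x - x ^ 2 / 2) * Real.sin (l * x))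
    = (Real.sqrt (2 * Real.pi) * ((t : ℂ) + (l : ℂ) * I)
        * Complex.exp (((t : ℂ) + (l : ℂ) * I) ^ 2 / 2)).im := by
  have h1 : ∫ x : ℝ, x * (Real.exp (t * x - x ^ 2 / 2) * Real.sin (l * x))
      = ∫ x : ℝ, ((x : ℂ) * gw ((t : ℂ) + (l : ℂ) * I) x).im := by
    congr 1; funext x; rw [xmul_im, gw_apply, cexp_decomp, im_AB]
  have hi : Integrable (fun x : ℝ => (x : ℂ) * gw ((t : ℂ) + (l : ℂ) * I) x) := by
    have := pow_mul_gw_integrable 1 ((t : ℂ) + (l : ℂ) * I)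
    simpa using this
  have h2 := gw_integral1 ((t : ℂ) + (l : ℂ) * I)
  rw [h1, integral_cim hi, h2]

lemma G2cos (t l : ℝ) : ∫ x : ℝ, x ^ 2 * (Real.exp (t * x - x ^ 2 / 2) * Real.cos (l * x))
    = (Real.sqrt (2 * Real.pi) * (1 + ((t : ℂ) + (l : ℂ) * I) ^ 2)
        * Complex.exp (((t : ℂ) + (l : ℂ) * I) ^ 2 / 2)).re := by
  have h1 : ∫ x : ℝ, x ^ 2 * (Real.exp (t * x - x ^ 2 / 2) * Real.cos (l * x))
      = ∫ x : ℝ, ((x : ℂ) ^ 2 * gw ((t : ℂ) + (l : ℂ) * I) x).re := by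
    congr 1; funext x
    rw [show ((x : ℂ)) ^ 2 = ((x ^ 2 : ℝ) : ℂ) by push_cast; ring, xmul_re, gw_apply,
      cexp_decomp, re_AB]
  have hi : Integrable (fun x : ℝ => (x : ℂ) ^ 2 * gw ((t : ℂ) + (l : ℂ) * I) x) :=
    pow_mul_gw_integrable 2 _
  have h2 := gw_integral2 ((t : ℂ) + (l : ℂ) * I)
  rw [h1, integral_cre hi, h2]

lemma G2sin (t l : ℝ) : ∫ x : ℝ, x ^ 2 * (Real.exp (t * x - x ^ 2 / 2) * Real.sin (l * x))
    = (Real.sqrt (2 * Real.pi) * (1 + ((t : ℂ) + (l : ℂ) * I) ^ 2)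
        * Complex.exp (((t : ℂ) + (l : ℂ) * I) ^ 2 / 2)).im := by
  have h1 : ∫ x : ℝ, x ^ 2 * (Real.exp (t * x - x ^ 2 / 2) * Real.sin (l * x))
      = ∫ x : ℝ, ((x : ℂ) ^ 2 * gw ((t : ℂ) + (l : ℂ) * I) x).im := by
    congr 1; funext x
    rw [show ((x : ℂ)) ^ 2 = ((x ^ 2 : ℝ) : ℂ) by push_cast; ring, xmul_im, gw_apply,
      cexp_decomp, im_AB]
  have hi : Integrable (fun x : ℝ => (x : ℂ) ^ 2 * gw ((t : ℂ) + (l : ℂ) * I) x) :=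
    pow_mul_gw_integrable 2 _
  have h2 := gw_integral2 ((t : ℂ) + (l : ℂ) * I)
  rw [h1, integral_cim hi, h2]

lemma trig_bound (ak bk e l x : ℝ) (he : 0 ≤ e) :
    |e * (ak * Real.cos (l * x) + bk * Real.sin (l * x))| ≤ e * (|ak| + |bk|) := by
  rw [abs_mul, _root_.abs_of_nonneg he]
  refine mul_le_mul_of_nonneg_left ?_ he
  calc |ak * Real.cos (l * x) + bk * Real.sin (l * x)|
      ≤ |ak * Real.cos (l * x)| + |bk * Real.sin (l * x)| := abs_add_le _ _
    _ ≤ |ak| * 1 + |bk| * 1 := by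
        rw [abs_mul, abs_mul]
        gcongr
        · exact Real.abs_cos_le_one _
        · exact Real.abs_sin_le_one _
    _ = |ak| + |bk| := by ring

noncomputable def ee (k : ℕ) : ℝ := Real.exp (((k:ℝ)+1)^2/2)

noncomputable def gg (a b : ℕ → ℝ) (k : ℕ) (x : ℝ) : ℝ :=
  ee k * (a (k+1) * Real.cos (((k:ℝ)+1)*x) + b (k+1) * Real.sin (((k:ℝ)+1)*x))

lemma gg_cont (a b : ℕ → ℝ) (k : ℕ) : Continuous (gg a b k) := by
  unfold gg
  apply Continuous.mul continuous_const
  exact ((continuous_const.mul (by continuity)).add (continuous_const.mul (by continuity)))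

lemma gg_bound (a b : ℕ → ℝ) (k : ℕ) (x : ℝ) :
    |gg a b k x| ≤ ee k * (|a (k+1)| + |b (k+1)|) :=
  trig_bound _ _ _ _ _ (Real.exp_pos _).le

set_option maxHeartbeats 1000000 in
lemma master (a b : ℕ → ℝ)
    (hsum : Summable (fun k : ℕ => ee k * (|a (k+1)| + |b (k+1)|)))
    (u : ℝ → ℝ)
    (hui : Integrable (fun x : ℝ => u x * Real.exp (-x^2/2)))
    (huia : Integrable (fun x : ℝ => |u x| * Real.exp (-x^2/2)))
    (A B : ℝ → ℝ)
    (hA : ∀ l : ℝ, ∫ x : ℝ, u x * Real.exp (-x^2/2) * Real.cos (l*x) = A l)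
    (hB : ∀ l : ℝ, ∫ x : ℝ, u x * Real.exp (-x^2/2) * Real.sin (l*x) = B l) :
    ∫ x : ℝ, u x * Real.exp (-x^2/2) * (∑' k : ℕ, gg a b k x)
      = ∑' k : ℕ, ee k * (a (k+1) * A ((k:ℝ)+1) + b (k+1) * B ((k:ℝ)+1)) := by
  have hFi : ∀ k : ℕ, Integrable (fun x : ℝ => u x * Real.exp (-x^2/2) * gg a b k x) := by
    intro k
    have := Integrable.bdd_mul hui (gg_cont a b k).aestronglyMeasurable
      (c := ee k * (|a (k+1)| + |b (k+1)|)) (ae_of_all _ fun x => by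
        rw [Real.norm_eq_abs]; exact gg_bound a b k x)
    exact this.congr (by filter_upwards with x; ring)
  have hcossin : ∀ k : ℕ,
      Integrable (fun x : ℝ => u x * Real.exp (-x^2/2) * Real.cos (((k:ℝ)+1)*x))
      ∧ Integrable (fun x : ℝ => u x * Real.exp (-x^2/2) * Real.sin (((k:ℝ)+1)*x)) := by
    intro k
    constructor
    · exact (Integrable.bdd_mul hui
        ((by continuity : Continuous fun x : ℝ => Real.cos (((k:ℝ)+1)*x)).aestronglyMeasurable)
        (c := 1) (ae_of_all _ fun x => by rw [Real.norm_eq_abs]; exact Real.abs_cos_le_one _)).congr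
        (by filter_upwards with x; ring)
    · exact (Integrable.bdd_mul hui
        ((by continuity : Continuous fun x : ℝ => Real.sin (((k:ℝ)+1)*x)).aestronglyMeasurable)
        (c := 1) (ae_of_all _ fun x => by rw [Real.norm_eq_abs]; exact Real.abs_sin_le_one _)).congr
        (by filter_upwards with x; ring)
  have hval : ∀ k : ℕ, ∫ x : ℝ, u x * Real.exp (-x^2/2) * gg a b k x
      = ee k * (a (k+1) * A ((k:ℝ)+1) + b (k+1) * B ((k:ℝ)+1)) := by
    intro k
    have hptw : ∀ x : ℝ, u x * Real.exp (-x^2/2) * gg a b k x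
        = ee k * a (k+1) * (u x * Real.exp (-x^2/2) * Real.cos (((k:ℝ)+1)*x))
          + ee k * b (k+1) * (u x * Real.exp (-x^2/2) * Real.sin (((k:ℝ)+1)*x)) := by
      intro x; unfold gg; ring
    simp_rw [hptw]
    rw [integral_add (((hcossin k).1).const_mul _) (((hcossin k).2).const_mul _),
      integral_const_mul, integral_const_mul, hA, hB]
    ring
  have hnorm : Summable (fun k : ℕ => ∫ x : ℝ, ‖u x * Real.exp (-x^2/2) * gg a b k x‖) := by
    apply Summable.of_nonneg_of_le (fun k => integral_nonneg (fun x => norm_nonneg _))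
      (fun k => ?_) (hsum.mul_right (∫ x : ℝ, |u x| * Real.exp (-x^2/2)))
    calc (∫ x : ℝ, ‖u x * Real.exp (-x^2/2) * gg a b k x‖)
        ≤ ∫ x : ℝ, (ee k * (|a (k+1)| + |b (k+1)|)) * (|u x| * Real.exp (-x^2/2)) := by
          apply integral_mono (hFi k).norm (huia.const_mul _)
          intro x
          dsimp only
          rw [Real.norm_eq_abs, abs_mul, abs_mul,
            _root_.abs_of_nonneg (Real.exp_pos (-x^2/2)).le]
          calc |u x| * Real.exp (-x^2/2) * |gg a b k x|
              ≤ |u x| * Real.exp (-x^2/2) * (ee k * (|a (k+1)| + |b (k+1)|)) := by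
                apply mul_le_mul_of_nonneg_left (gg_bound a b k x) (by positivity)
            _ = (ee k * (|a (k+1)| + |b (k+1)|)) * (|u x| * Real.exp (-x^2/2)) := by ring
      _ = ee k * (|a (k+1)| + |b (k+1)|) * (∫ x : ℝ, |u x| * Real.exp (-x^2/2)) := by
          rw [integral_const_mul]
  have hswap := integral_tsum_of_summable_integral_norm hFi hnorm
  have hptw2 : ∀ x : ℝ, u x * Real.exp (-x^2/2) * (∑' k : ℕ, gg a b k x)
      = ∑' k : ℕ, u x * Real.exp (-x^2/2) * gg a b k x := by
    intro x; rw [← tsum_mul_left]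
  simp_rw [hptw2]
  rw [← hswap]
  exact tsum_congr hval

lemma intExpE (t : ℝ) : Integrable (fun x : ℝ => Real.exp (t*x) * Real.exp (-x^2/2)) := by
  have h := (gw_integrable (t : ℂ)).norm
  refine h.congr ?_
  filter_upwards with x
  rw [gw_norm, Complex.ofReal_re, ← Real.exp_add]
  ring_nf

lemma intE : Integrable (fun x : ℝ => Real.exp (-x^2/2)) := by
  have := intExpE 0
  simpa using this

lemma intPowAbs (n : ℕ) : Integrable (fun x : ℝ => |x|^n * Real.exp (-x^2/2)) := by
  have h := (pow_mul_gw_integrable n 0).norm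
  refine h.congr ?_
  filter_upwards with x
  rw [norm_mul, norm_pow, Complex.norm_real, gw_norm, Real.norm_eq_abs, Complex.zero_re,
    zero_mul, zero_sub, neg_div]

lemma intPow (n : ℕ) : Integrable (fun x : ℝ => x^n * Real.exp (-x^2/2)) := by
  refine (intPowAbs n).mono ?_ ?_
  · exact (Continuous.mul (by continuity) (by continuity)).aestronglyMeasurable
  · filter_upwards with x
    rw [Real.norm_eq_abs, Real.norm_eq_abs, abs_mul, abs_mul, _root_.abs_pow,
      _root_.abs_pow, _root_.abs_abs]

lemma int_E : ∫ x : ℝ, Real.exp (-x^2/2) = Real.sqrt (2*Real.pi) := by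
  have h := Gcos 0 0
  have he : (fun x : ℝ => Real.exp (0*x - x^2/2) * Real.cos (0*x))
      = fun x : ℝ => Real.exp (-x^2/2) := by
    funext x
    rw [show (0:ℝ)*x - x^2/2 = -x^2/2 by ring, zero_mul, Real.cos_zero, mul_one]
  rw [he] at h
  rw [h]; norm_num

lemma int_expE (t : ℝ) : ∫ x : ℝ, Real.exp (t*x) * Real.exp (-x^2/2)
    = Real.sqrt (2*Real.pi) * Real.exp (t^2/2) := by
  have h := Gcos t 0
  have he : (fun x : ℝ => Real.exp (t*x - x^2/2) * Real.cos (0*x))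
      = fun x : ℝ => Real.exp (t*x) * Real.exp (-x^2/2) := by
    funext x
    rw [show t*x - x^2/2 = t*x + -x^2/2 by ring, Real.exp_add, zero_mul, Real.cos_zero, mul_one]
  rw [he] at h
  rw [h]; norm_num

lemma sqhalf (l : ℝ) : (((l:ℂ))*I)^2/2 = ((-l^2/2 : ℝ):ℂ) := by
  push_cast
  linear_combination ((l:ℂ)^2/2) * Complex.I_sq

lemma z0 (l : ℝ) : ((0:ℝ):ℂ) + (l:ℂ)*I = (l:ℂ)*I := by simp

lemma M1cos (l : ℝ) : ∫ x : ℝ, x * Real.exp (-x^2/2) * Real.cos (l*x) = 0 := by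
  have h := G1cos 0 l
  have he : (fun x : ℝ => x * (Real.exp (0*x - x^2/2) * Real.cos (l*x)))
      = fun x : ℝ => x * Real.exp (-x^2/2) * Real.cos (l*x) := by
    funext x; rw [show (0:ℝ)*x - x^2/2 = -x^2/2 by ring, ← mul_assoc]
  rw [he] at h
  rw [h, z0, sqhalf, ← Complex.ofReal_exp,
    show (((Real.sqrt (2*Real.pi)):ℂ) * ((l:ℂ)*I) * ((Real.exp (-l^2/2) : ℝ):ℂ))
      = ((0:ℝ):ℂ) + ((Real.sqrt (2*Real.pi) * (l * Real.exp (-l^2/2)) : ℝ):ℂ)*I by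
        push_cast; ring, re_AB]

lemma M1sin (l : ℝ) : ∫ x : ℝ, x * Real.exp (-x^2/2) * Real.sin (l*x)
    = Real.sqrt (2*Real.pi) * (l * Real.exp (-l^2/2)) := by
  have h := G1sin 0 l
  have he : (fun x : ℝ => x * (Real.exp (0*x - x^2/2) * Real.sin (l*x)))
      = fun x : ℝ => x * Real.exp (-x^2/2) * Real.sin (l*x) := by
    funext x; rw [show (0:ℝ)*x - x^2/2 = -x^2/2 by ring, ← mul_assoc]
  rw [he] at h
  rw [h, z0, sqhalf, ← Complex.ofReal_exp,
    show (((Real.sqrt (2*Real.pi)):ℂ) * ((l:ℂ)*I) * ((Real.exp (-l^2/2) : ℝ):ℂ))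
      = ((0:ℝ):ℂ) + ((Real.sqrt (2*Real.pi) * (l * Real.exp (-l^2/2)) : ℝ):ℂ)*I by
        push_cast; ring, im_AB]

lemma M2cos (l : ℝ) : ∫ x : ℝ, x^2 * Real.exp (-x^2/2) * Real.cos (l*x)
    = Real.sqrt (2*Real.pi) * ((1-l^2) * Real.exp (-l^2/2)) := by
  have h := G2cos 0 l
  have he : (fun x : ℝ => x^2 * (Real.exp (0*x - x^2/2) * Real.cos (l*x)))
      = fun x : ℝ => x^2 * Real.exp (-x^2/2) * Real.cos (l*x) := by
    funext x; rw [show (0:ℝ)*x - x^2/2 = -x^2/2 by ring, ← mul_assoc]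
  rw [he] at h
  rw [h, z0, sqhalf, ← Complex.ofReal_exp,
    show ((1:ℂ) + ((l:ℂ)*I)^2) = ((1 - l^2 : ℝ):ℂ) by
      push_cast; linear_combination ((l:ℂ)^2) * Complex.I_sq,
    show (((Real.sqrt (2*Real.pi)):ℂ) * ((1 - l^2 : ℝ):ℂ) * ((Real.exp (-l^2/2) : ℝ):ℂ))
      = ((Real.sqrt (2*Real.pi) * ((1-l^2) * Real.exp (-l^2/2)) : ℝ):ℂ)
        + ((0:ℝ):ℂ)*I by push_cast; ring, re_AB]

lemma M2sin (l : ℝ) : ∫ x : ℝ, x^2 * Real.exp (-x^2/2) * Real.sin (l*x) = 0 := by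
  have h := G2sin 0 l
  have he : (fun x : ℝ => x^2 * (Real.exp (0*x - x^2/2) * Real.sin (l*x)))
      = fun x : ℝ => x^2 * Real.exp (-x^2/2) * Real.sin (l*x) := by
    funext x; rw [show (0:ℝ)*x - x^2/2 = -x^2/2 by ring, ← mul_assoc]
  rw [he] at h
  rw [h, z0, sqhalf, ← Complex.ofReal_exp,
    show ((1:ℂ) + ((l:ℂ)*I)^2) = ((1 - l^2 : ℝ):ℂ) by
      push_cast; linear_combination ((l:ℂ)^2) * Complex.I_sq,
    show (((Real.sqrt (2*Real.pi)):ℂ) * ((1 - l^2 : ℝ):ℂ) * ((Real.exp (-l^2/2) : ℝ):ℂ))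
      = ((Real.sqrt (2*Real.pi) * ((1-l^2) * Real.exp (-l^2/2)) : ℝ):ℂ)
        + ((0:ℝ):ℂ)*I by push_cast; ring, im_AB]

lemma M0cos (l : ℝ) : ∫ x : ℝ, Real.exp (-x^2/2) * Real.cos (l*x)
    = Real.sqrt (2*Real.pi) * Real.exp (-l^2/2) := by
  have h := Gcos 0 l
  have he : (fun x : ℝ => Real.exp (0*x - x^2/2) * Real.cos (l*x))
      = fun x : ℝ => Real.exp (-x^2/2) * Real.cos (l*x) := by
    funext x; rw [show (0:ℝ)*x - x^2/2 = -x^2/2 by ring]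
  rw [he] at h
  rw [h, zero_mul, Real.cos_zero, mul_one,
    show ((0:ℝ)^2 - l^2)/2 = -l^2/2 by ring]

lemma M0sin (l : ℝ) : ∫ x : ℝ, Real.exp (-x^2/2) * Real.sin (l*x) = 0 := by
  have h := Gsin 0 l
  have he : (fun x : ℝ => Real.exp (0*x - x^2/2) * Real.sin (l*x))
      = fun x : ℝ => Real.exp (-x^2/2) * Real.sin (l*x) := by
    funext x; rw [show (0:ℝ)*x - x^2/2 = -x^2/2 by ring]
  rw [he] at h
  rw [h, zero_mul, Real.sin_zero, mul_zero, mul_zero]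

lemma GcosE (t l : ℝ) : ∫ x : ℝ, Real.exp (t*x) * Real.exp (-x^2/2) * Real.cos (l*x)
    = Real.sqrt (2*Real.pi) * (Real.exp ((t^2 - l^2)/2) * Real.cos (t*l)) := by
  have h := Gcos t l
  have he : (fun x : ℝ => Real.exp (t*x - x^2/2) * Real.cos (l*x))
      = fun x : ℝ => Real.exp (t*x) * Real.exp (-x^2/2) * Real.cos (l*x) := by
    funext x; rw [show t*x - x^2/2 = t*x + -x^2/2 by ring, Real.exp_add]
  rw [he] at h
  rw [h]

lemma GsinE (t l : ℝ) : ∫ x : ℝ, Real.exp (t*x) * Real.exp (-x^2/2) * Real.sin (l*x)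
    = Real.sqrt (2*Real.pi) * (Real.exp ((t^2 - l^2)/2) * Real.sin (t*l)) := by
  have h := Gsin t l
  have he : (fun x : ℝ => Real.exp (t*x - x^2/2) * Real.sin (l*x))
      = fun x : ℝ => Real.exp (t*x) * Real.exp (-x^2/2) * Real.sin (l*x) := by
    funext x; rw [show t*x - x^2/2 = t*x + -x^2/2 by ring, Real.exp_add]
  rw [he] at h
  rw [h]

lemma ee_cancel (k : ℕ) : ee k * Real.exp (-((k:ℝ)+1)^2/2) = 1 := by
  unfold ee
  rw [← Real.exp_add, show ((k:ℝ)+1)^2/2 + -((k:ℝ)+1)^2/2 = 0 by ring, Real.exp_zero]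

lemma one_le_ee (k : ℕ) : 1 ≤ ee k := Real.one_le_exp (by positivity)

lemma sq_le_ee (k : ℕ) : ((k:ℝ)+1)^2 ≤ 2 * ee k := by
  have h := Real.add_one_le_exp (((k:ℝ)+1)^2/2)
  unfold ee
  nlinarith

set_option maxHeartbeats 2000000 in
theorem trigonometric_series_density
    (φ : ℝ → ℝ) (hφ : ∀ x, φ x = Real.exp (-x ^ 2 / 2) / Real.sqrt (2 * Real.pi))
    (a b : ℕ → ℝ)
    (hsum : Summable (fun k : ℕ =>
      Real.exp (((k : ℝ) + 1) ^ 2 / 2) * (|a (k + 1)| + |b (k + 1)|)))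
    (P : ℝ → ℝ)
    (hP : ∀ t, P t = a 0 + ∑' k : ℕ,
      (a (k + 1) * Real.cos (((k : ℝ) + 1) * t) + b (k + 1) * Real.sin (((k : ℝ) + 1) * t)))
    (hP0 : a 0 + ∑' k : ℕ, a (k + 1) = 0)
    (hP1 : ∑' k : ℕ, ((k : ℝ) + 1) * b (k + 1) = 0)
    (hP2 : ∑' k : ℕ, ((k : ℝ) + 1) ^ 2 * a (k + 1) = 0) :
    ∃ c₀ : ℝ, 0 < c₀ ∧ ∀ c : ℝ, c ≠ 0 → |c| ≤ c₀ →
      ∃ p : ℝ → ℝ,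
        (∀ x, p x = φ x * (1 - c * (a 0 + ∑' k : ℕ,
          Real.exp (((k : ℝ) + 1) ^ 2 / 2) *
            (a (k + 1) * Real.cos (((k : ℝ) + 1) * x)
              + b (k + 1) * Real.sin (((k : ℝ) + 1) * x))))) ∧
        (∀ x, 0 ≤ p x) ∧
        (∫ x, p x = 1) ∧
        (∫ x, x * p x = 0) ∧
        (∫ x, x ^ 2 * p x = 1) ∧
        (∀ t : ℝ, ∫ x, Real.exp (t * x) * p x
            = (1 - c * P t) * Real.exp (t ^ 2 / 2)) := by
  have hsum' : Summable (fun k : ℕ => ee k * (|a (k+1)| + |b (k+1)|)) := hsum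
  have hW0 : 0 ≤ ∑' k : ℕ, ee k * (|a (k+1)| + |b (k+1)|) :=
    tsum_nonneg (fun k => mul_nonneg (le_of_lt (Real.exp_pos _)) (by positivity))
  have h2π : (0:ℝ) < Real.sqrt (2*Real.pi) := Real.sqrt_pos.mpr (by positivity)
  refine ⟨(|a 0| + (∑' k : ℕ, ee k * (|a (k+1)| + |b (k+1)|)) + 1)⁻¹,
    inv_pos.mpr (by nlinarith [abs_nonneg (a 0), hW0]), ?_⟩
  intro c hc0 hcle
  -- basic facts about the series
  have hTsummable : ∀ x : ℝ, Summable (fun k : ℕ => |gg a b k x|) := fun x =>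
    Summable.of_nonneg_of_le (fun k => abs_nonneg _) (fun k => gg_bound a b k x) hsum'
  have hTb : ∀ x : ℝ, |∑' k : ℕ, gg a b k x|
      ≤ ∑' k : ℕ, ee k * (|a (k+1)| + |b (k+1)|) := by
    intro x
    have h1 : ‖∑' k : ℕ, gg a b k x‖ ≤ ∑' k : ℕ, ‖gg a b k x‖ :=
      norm_tsum_le_tsum_norm (by simpa [Real.norm_eq_abs] using hTsummable x)
    rw [Real.norm_eq_abs] at h1
    refine h1.trans (Summable.tsum_le_tsum (fun k => by
      rw [Real.norm_eq_abs]; exact gg_bound a b k x)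
      (by simpa [Real.norm_eq_abs] using hTsummable x) hsum')
  have hTcont : Continuous (fun x : ℝ => ∑' k : ℕ, gg a b k x) :=
    continuous_tsum (fun k => gg_cont a b k) hsum'
      (fun k x => by rw [Real.norm_eq_abs]; exact gg_bound a b k x)
  -- the key computation
  have key : ∀ (u : ℝ → ℝ),
      Integrable (fun x : ℝ => u x * Real.exp (-x^2/2)) →
      Integrable (fun x : ℝ => |u x| * Real.exp (-x^2/2)) →
      ∀ (I0 : ℝ) (A B : ℝ → ℝ),
      (∫ x : ℝ, u x * Real.exp (-x^2/2)) = I0 →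
      (∀ l : ℝ, ∫ x : ℝ, u x * Real.exp (-x^2/2) * Real.cos (l*x) = A l) →
      (∀ l : ℝ, ∫ x : ℝ, u x * Real.exp (-x^2/2) * Real.sin (l*x) = B l) →
      (∫ x : ℝ, u x * (φ x * (1 - c * (a 0 + ∑' k : ℕ, gg a b k x))))
        = (Real.sqrt (2*Real.pi))⁻¹ * (I0 - c * (a 0 * I0
            + ∑' k : ℕ, ee k * (a (k+1) * A ((k:ℝ)+1) + b (k+1) * B ((k:ℝ)+1)))) := by
    intro u hui huia I0 A B hI0 hA hB
    have huiT : Integrable (fun x : ℝ => u x * Real.exp (-x^2/2) * (∑' k : ℕ, gg a b k x)) :=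
      (Integrable.bdd_mul hui hTcont.aestronglyMeasurable
        (c := ∑' k : ℕ, ee k * (|a (k+1)| + |b (k+1)|))
          (ae_of_all _ fun x => by rw [Real.norm_eq_abs]; exact hTb x)).congr
        (by filter_upwards with x; ring)
    have hmaster := master a b hsum' u hui huia A B hA hB
    have hptw : ∀ x : ℝ, u x * (φ x * (1 - c * (a 0 + ∑' k : ℕ, gg a b k x)))
        = (u x * Real.exp (-x^2/2) - c * (a 0 * (u x * Real.exp (-x^2/2))
            + u x * Real.exp (-x^2/2) * (∑' k : ℕ, gg a b k x)))
          * (Real.sqrt (2*Real.pi))⁻¹ := by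
      intro x
      rw [hφ x, div_eq_mul_inv]
      ring
    have hadd : Integrable (fun x : ℝ => a 0 * (u x * Real.exp (-x^2/2))
        + u x * Real.exp (-x^2/2) * (∑' k : ℕ, gg a b k x)) :=
      ((hui.const_mul (a 0)).add huiT).congr (Filter.Eventually.of_forall fun x => rfl)
    simp_rw [hptw]
    rw [integral_mul_const, integral_sub hui (hadd.const_mul c),
      integral_const_mul, integral_add (hui.const_mul (a 0)) huiT, integral_const_mul, hI0,
      hmaster]
    ring
  -- define p
  refine ⟨fun x => φ x * (1 - c * (a 0 + ∑' k : ℕ, gg a b k x)),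
    fun x => rfl, ?_, ?_, ?_, ?_, ?_⟩
  -- nonnegativity
  · intro x
    have hfactor : 0 ≤ 1 - c * (a 0 + ∑' k : ℕ, gg a b k x) := by
      have h1 : |c * (a 0 + ∑' k : ℕ, gg a b k x)|
          ≤ |c| * (|a 0| + ∑' k : ℕ, ee k * (|a (k+1)| + |b (k+1)|)) := by
        rw [abs_mul]
        refine mul_le_mul_of_nonneg_left ?_ (abs_nonneg c)
        exact (abs_add_le _ _).trans (by linarith [hTb x])
      have h2 : |c| * (|a 0| + ∑' k : ℕ, ee k * (|a (k+1)| + |b (k+1)|)) < 1 := by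
        have hD : (0:ℝ) ≤ |a 0| + ∑' k : ℕ, ee k * (|a (k+1)| + |b (k+1)|) := by positivity
        have hstep := mul_le_mul_of_nonneg_right hcle hD
        refine lt_of_le_of_lt hstep ?_
        rw [inv_mul_lt_iff₀ (by positivity)]
        linarith
      have := (abs_le.mp (h1.trans h2.le)).2
      linarith [le_of_lt (lt_of_le_of_lt h1 h2)]
    have hφ0 : 0 ≤ φ x := by rw [hφ]; positivity
    positivity
  -- ∫ p = 1
  · have h := key (fun _ => (1:ℝ))
      (intE.congr (by filter_upwards with x; rw [one_mul]))
      (intE.congr (by filter_upwards with x; rw [abs_one, one_mul]))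
      (Real.sqrt (2*Real.pi))
      (fun l => Real.sqrt (2*Real.pi) * Real.exp (-l^2/2))
      (fun _ => 0)
      (by simp only [one_mul]; exact int_E)
      (fun l => by simp only [one_mul]; exact M0cos l)
      (fun l => by simp only [one_mul]; exact M0sin l)
    have hsum2 : (∑' k : ℕ, ee k * (a (k+1)
        * (Real.sqrt (2*Real.pi) * Real.exp (-((k:ℝ)+1)^2/2)) + b (k+1) * 0))
        = Real.sqrt (2*Real.pi) * ∑' k : ℕ, a (k+1) := by
      rw [← tsum_mul_left]
      refine tsum_congr (fun k => ?_)
      linear_combination (Real.sqrt (2*Real.pi) * a (k+1)) * ee_cancel k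
    rw [hsum2] at h
    have hP0' : (∑' k : ℕ, a (k+1)) = -(a 0) := by linarith
    rw [hP0'] at h
    simp only [one_mul] at h
    refine h.trans ?_
    rw [show Real.sqrt (2*Real.pi) - c * (a 0 * Real.sqrt (2*Real.pi)
        + Real.sqrt (2*Real.pi) * -(a 0)) = Real.sqrt (2*Real.pi) by ring,
      inv_mul_cancel₀ h2π.ne']
  -- ∫ x p = 0
  · have h := key (fun y => y)
      (by simpa using intPow 1)
      (by simpa using intPowAbs 1)
      0
      (fun _ => 0)
      (fun l => Real.sqrt (2*Real.pi) * (l * Real.exp (-l^2/2)))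
      (by have := M1cos 0; simpa using this)
      (fun l => M1cos l)
      (fun l => M1sin l)
    have hsum2 : (∑' k : ℕ, ee k * (a (k+1) * 0 + b (k+1)
        * (Real.sqrt (2*Real.pi) * (((k:ℝ)+1) * Real.exp (-((k:ℝ)+1)^2/2)))))
        = Real.sqrt (2*Real.pi) * ∑' k : ℕ, ((k:ℝ)+1) * b (k+1) := by
      rw [← tsum_mul_left]
      refine tsum_congr (fun k => ?_)
      linear_combination (Real.sqrt (2*Real.pi) * (((k:ℝ)+1) * b (k+1))) * ee_cancel k
    rw [hsum2, hP1] at h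
    refine h.trans ?_
    ring
  -- ∫ x² p = 1
  · have sAabs : Summable (fun k : ℕ => |a (k+1)|) := by
      refine Summable.of_nonneg_of_le (fun k => abs_nonneg _) (fun k => ?_) hsum'
      have h1 := one_le_ee k
      have h2 := abs_nonneg (a (k+1))
      have h3 := abs_nonneg (b (k+1))
      nlinarith
    have sA : Summable (fun k : ℕ => a (k+1)) := sAabs.of_abs
    have sA2 : Summable (fun k : ℕ => ((k:ℝ)+1)^2 * a (k+1)) := by
      refine Summable.of_abs ?_
      refine Summable.of_nonneg_of_le (fun k => abs_nonneg _) (fun k => ?_)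
        (hsum'.mul_left 2)
      rw [abs_mul, _root_.abs_of_nonneg (by positivity : (0:ℝ) ≤ ((k:ℝ)+1)^2)]
      have h1 := sq_le_ee k
      have h2 := abs_nonneg (a (k+1))
      have h3 := abs_nonneg (b (k+1))
      have h4 := (Real.exp_pos (((k:ℝ)+1)^2/2)).le
      unfold ee at *
      nlinarith
    have h := key (fun y => y^2)
      (intPow 2)
      ((intPow 2).congr (by
        filter_upwards with x
        rw [_root_.abs_of_nonneg (sq_nonneg x)]))
      (Real.sqrt (2*Real.pi))
      (fun l => Real.sqrt (2*Real.pi) * ((1-l^2) * Real.exp (-l^2/2)))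
      (fun _ => 0)
      (by have := M2cos 0; simpa using this)
      (fun l => M2cos l)
      (fun l => M2sin l)
    have hsum2 : (∑' k : ℕ, ee k * (a (k+1)
        * (Real.sqrt (2*Real.pi) * ((1-((k:ℝ)+1)^2) * Real.exp (-((k:ℝ)+1)^2/2)))
          + b (k+1) * 0))
        = Real.sqrt (2*Real.pi) * (∑' k : ℕ, a (k+1))
          - Real.sqrt (2*Real.pi) * (∑' k : ℕ, ((k:ℝ)+1)^2 * a (k+1)) := by
      rw [← tsum_mul_left, ← tsum_mul_left, ← Summable.tsum_sub (sA.mul_left _) (sA2.mul_left _)]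
      refine tsum_congr (fun k => ?_)
      linear_combination (Real.sqrt (2*Real.pi) * a (k+1) * (1 - ((k:ℝ)+1)^2)) * ee_cancel k
    have hP0' : (∑' k : ℕ, a (k+1)) = -(a 0) := by linarith
    rw [hsum2, hP0', hP2] at h
    refine h.trans ?_
    rw [show Real.sqrt (2*Real.pi) - c * (a 0 * Real.sqrt (2*Real.pi)
        + (Real.sqrt (2*Real.pi) * -(a 0) - Real.sqrt (2*Real.pi) * 0))
        = Real.sqrt (2*Real.pi) by ring,
      inv_mul_cancel₀ h2π.ne']
  -- Laplace transform
  · intro t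
    have h := key (fun x => Real.exp (t*x))
      (intExpE t)
      ((intExpE t).congr (by
        filter_upwards with x
        rw [_root_.abs_of_nonneg (Real.exp_pos (t*x)).le]))
      (Real.sqrt (2*Real.pi) * Real.exp (t^2/2))
      (fun l => Real.sqrt (2*Real.pi) * (Real.exp ((t^2-l^2)/2) * Real.cos (t*l)))
      (fun l => Real.sqrt (2*Real.pi) * (Real.exp ((t^2-l^2)/2) * Real.sin (t*l)))
      (int_expE t)
      (fun l => GcosE t l)
      (fun l => GsinE t l)
    have hsum2 : (∑' k : ℕ, ee k * (a (k+1)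
        * (Real.sqrt (2*Real.pi) * (Real.exp ((t^2-((k:ℝ)+1)^2)/2) * Real.cos (t*((k:ℝ)+1))))
          + b (k+1)
        * (Real.sqrt (2*Real.pi) * (Real.exp ((t^2-((k:ℝ)+1)^2)/2) * Real.sin (t*((k:ℝ)+1))))))
        = Real.sqrt (2*Real.pi) * Real.exp (t^2/2)
          * ∑' k : ℕ, (a (k+1) * Real.cos (((k:ℝ)+1)*t) + b (k+1) * Real.sin (((k:ℝ)+1)*t)) := by
      rw [mul_assoc, ← tsum_mul_left, ← tsum_mul_left]
      refine tsum_congr (fun k => ?_)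
      have hee : ee k * Real.exp ((t^2-((k:ℝ)+1)^2)/2) = Real.exp (t^2/2) := by
        unfold ee
        rw [← Real.exp_add]
        congr 1
        ring
      rw [show Real.cos (t*((k:ℝ)+1)) = Real.cos (((k:ℝ)+1)*t) by rw [mul_comm],
        show Real.sin (t*((k:ℝ)+1)) = Real.sin (((k:ℝ)+1)*t) by rw [mul_comm]]
      linear_combination (Real.sqrt (2*Real.pi) * (a (k+1) * Real.cos (((k:ℝ)+1)*t)
        + b (k+1) * Real.sin (((k:ℝ)+1)*t))) * hee
    rw [hsum2] at h
    have hPt : (∑' k : ℕ, (a (k+1) * Real.cos (((k:ℝ)+1)*t)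
        + b (k+1) * Real.sin (((k:ℝ)+1)*t))) = P t - a 0 := by
      rw [hP t]; ring
    rw [hPt] at h
    refine h.trans ?_
    rw [show Real.sqrt (2*Real.pi) * Real.exp (t^2/2)
        - c * (a 0 * (Real.sqrt (2*Real.pi) * Real.exp (t^2/2))
          + Real.sqrt (2*Real.pi) * Real.exp (t^2/2) * (P t - a 0))
        = Real.sqrt (2*Real.pi) * ((1 - c * P t) * Real.exp (t^2/2)) by ring,
      ← mul_assoc, inv_mul_cancel₀ h2π.ne', one_mul]
end

section
/- If X is a subgaussian random variable with mean zero and variance σ² whose characteristic function extends to an entire function of the form f(z) = exp(−γz²/2)·∏_{n≥1}(1 − z²/z_n²) with γ ≥ 0, z_n > 0 real, and ∑ z_n^{−2} < ∞, then σ²/2 = γ/2 + ∑_{n≥1} z_n^{−2}, and consequently E[exp(tX)] = exp(γt²/2)·∏_{n≥1}(1 + t²/z_n²) ≤ exp(σ² t²/2) for all real t, i.e., X is strictly subgaussian. -/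
open MeasureTheory ProbabilityTheory Complex

lemma expE3 {v : ℝ} (hv : 0 ≤ v) : Real.exp v - 1 ≤ v * Real.exp v := by
  have h1 := Real.add_one_le_exp (-v)
  have h2 := Real.exp_pos v
  rw [Real.exp_neg] at h1
  have h3 : (Real.exp v)⁻¹ * Real.exp v = 1 := inv_mul_cancel₀ h2.ne'
  nlinarith

lemma expE0 (v : ℝ) : |Real.exp v - 1| ≤ |v| * Real.exp |v| := by
  rcases le_or_gt 0 v with hv | hv
  · rw [_root_.abs_of_nonneg hv,
      _root_.abs_of_nonneg (by linarith [Real.one_le_exp hv] : (0:ℝ) ≤ Real.exp v - 1)]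
    exact expE3 hv
  · have h1 := Real.add_one_le_exp v
    have h4 : (1:ℝ) ≤ Real.exp (-v) := Real.one_le_exp (by linarith)
    rw [abs_of_neg hv, _root_.abs_of_nonpos
      (by linarith [Real.exp_le_one_iff.mpr hv.le] : Real.exp v - 1 ≤ 0)]
    nlinarith

lemma expE1 (u : ℝ) : |Real.exp u - 1 - u| ≤ u ^ 2 * Real.exp |u| := by
  have key := Convex.norm_image_sub_le_of_norm_hasDerivWithin_le
    (f := fun s : ℝ => Real.exp s - 1 - s) (f' := fun s => Real.exp s - 1)
    (s := Set.uIcc 0 u) (C := |u| * Real.exp |u|)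
    (fun x _ => (((Real.hasDerivAt_exp x).sub_const 1).sub (hasDerivAt_id x)).hasDerivWithinAt)
    (fun x hx => by
      have hxu : |x| ≤ |u| := by
        rw [Set.mem_uIcc] at hx
        rcases hx with ⟨h1, h2⟩ | ⟨h1, h2⟩ <;> rw [abs_le] <;>
          constructor <;> nlinarith [le_abs_self u, neg_abs_le u]
      calc ‖Real.exp x - 1‖ ≤ |x| * Real.exp |x| := expE0 x
        _ ≤ |u| * Real.exp |u| := by
          exact mul_le_mul hxu (Real.exp_le_exp.mpr hxu) (Real.exp_pos _).le (abs_nonneg _))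
    (convex_uIcc 0 u) (Set.left_mem_uIcc) (Set.right_mem_uIcc)
  simp only [Real.exp_zero, Real.norm_eq_abs, sub_zero] at key
  calc |Real.exp u - 1 - u| = |(Real.exp u - 1 - u) - (1 - 1)| := by norm_num
    _ ≤ |u| * Real.exp |u| * |u| := key
    _ = u ^ 2 * Real.exp |u| := by rw [← _root_.sq_abs]; ring

lemma expE2 (u : ℝ) : |Real.exp u - 1 - u - u ^ 2 / 2| ≤ |u| ^ 3 * Real.exp |u| := by
  have key := Convex.norm_image_sub_le_of_norm_hasDerivWithin_le
    (f := fun s : ℝ => Real.exp s - 1 - s - s ^ 2 / 2) (f' := fun s => Real.exp s - 1 - s)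
    (s := Set.uIcc 0 u) (C := u ^ 2 * Real.exp |u|)
    (fun x _ => by
      have h : HasDerivAt (fun s : ℝ => Real.exp s - 1 - s - s ^ 2 / 2)
          (Real.exp x - 1 - ↑2 * x ^ (2 - 1) / 2) x :=
        ((((Real.hasDerivAt_exp x).sub_const 1).sub (hasDerivAt_id x)).sub
          ((hasDerivAt_pow 2 x).div_const 2))
      have h2 : Real.exp x - 1 - ↑2 * x ^ (2 - 1) / 2 = Real.exp x - 1 - x := by norm_num
      rw [h2] at h
      exact h.hasDerivWithinAt)
    (fun x hx => by
      have hxu : |x| ≤ |u| := by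
        rw [Set.mem_uIcc] at hx
        rcases hx with ⟨h1, h2⟩ | ⟨h1, h2⟩ <;> rw [abs_le] <;>
          constructor <;> nlinarith [le_abs_self u, neg_abs_le u]
      calc ‖Real.exp x - 1 - x‖ ≤ x ^ 2 * Real.exp |x| := expE1 x
        _ ≤ u ^ 2 * Real.exp |u| := by
          have : x ^ 2 ≤ u ^ 2 := by rw [← _root_.sq_abs x, ← _root_.sq_abs u]; nlinarith [abs_nonneg x]
          exact mul_le_mul this (Real.exp_le_exp.mpr hxu) (Real.exp_pos _).le (sq_nonneg _))
    (convex_uIcc 0 u) (Set.left_mem_uIcc) (Set.right_mem_uIcc)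
  simp only [Real.exp_zero, Real.norm_eq_abs] at key
  calc |Real.exp u - 1 - u - u ^ 2 / 2|
      = |(Real.exp u - 1 - u - u ^ 2 / 2) - (1 - 1 - 0 - 0 ^ 2 / 2)| := by norm_num
    _ ≤ u ^ 2 * Real.exp |u| * |u - 0| := key
    _ = |u| ^ 3 * Real.exp |u| := by rw [sub_zero, ← _root_.sq_abs u]; ring

lemma fin_lb (b : ℕ → ℝ) (hb : ∀ n, 0 ≤ b n) (s : Finset ℕ) :
    1 + ∑ i ∈ s, b i ≤ ∏ i ∈ s, (1 + b i) := by
  classical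
  induction s using Finset.induction with
  | empty => simp
  | insert _ _ ha ih =>
    rename_i a s
    rw [Finset.sum_insert ha, Finset.prod_insert ha]
    have h1 : 0 ≤ ∑ i ∈ s, b i := Finset.sum_nonneg fun i _ => hb i
    have h2 : (1 + b a) * (1 + ∑ i ∈ s, b i) ≤ (1 + b a) * ∏ i ∈ s, (1 + b i) :=
      mul_le_mul_of_nonneg_left ih (by linarith [hb a])
    nlinarith [mul_nonneg (hb a) h1]

section prodlems
variable {z : ℕ → ℝ} (hz : ∀ n, 0 < z n) (hzsum : Summable (fun n => 1 / (z n) ^ 2)) (t : ℝ)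
include hzsum

lemma mult_one_add : Multipliable (fun n => 1 + t ^ 2 / (z n) ^ 2) := by
  refine (fun x => Real.multipliable_of_summable_log (f := fun n => 1 + x ^ 2 / (z n) ^ 2)
    (fun n => ?_) ?_) t
  · show (0:ℝ) < 1 + x ^ 2 / (z n) ^ 2
    positivity
  show Summable fun n => Real.log (1 + x ^ 2 / (z n) ^ 2)
  apply Summable.of_nonneg_of_le
    (fun n => Real.log_nonneg (le_add_of_nonneg_right (by positivity)))
    (fun n => ?_) (hzsum.mul_left (x ^ 2))
  have h := Real.log_le_sub_one_of_pos (show (0:ℝ) < 1 + x ^ 2 / (z n) ^ 2 by positivity)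
  calc Real.log (1 + x ^ 2 / z n ^ 2) ≤ 1 + x ^ 2 / z n ^ 2 - 1 := h
    _ = x ^ 2 * (1 / z n ^ 2) := by ring

lemma tprod_ub : ∏' n, (1 + t ^ 2 / (z n) ^ 2) ≤ Real.exp (t ^ 2 * ∑' n, 1 / (z n) ^ 2) := by
  apply hasProd_le_of_prod_le (mult_one_add hzsum t (z := z)).hasProd
  intro s
  calc ∏ i ∈ s, (1 + t ^ 2 / z i ^ 2) ≤ ∏ i ∈ s, Real.exp (t ^ 2 / z i ^ 2) :=
        Finset.prod_le_prod (fun i _ => by positivity)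
          (fun i _ => by linarith [Real.add_one_le_exp (t ^ 2 / z i ^ 2)])
    _ = Real.exp (∑ i ∈ s, t ^ 2 / z i ^ 2) := by rw [Real.exp_sum]
    _ ≤ Real.exp (t ^ 2 * ∑' n, 1 / (z n) ^ 2) := by
        apply Real.exp_le_exp.mpr
        have : ∑ i ∈ s, t ^ 2 / z i ^ 2 = t ^ 2 * ∑ i ∈ s, 1 / z i ^ 2 := by
          rw [Finset.mul_sum]; exact Finset.sum_congr rfl fun i _ => by ring
        rw [this]
        exact mul_le_mul_of_nonneg_left
          (Summable.sum_le_tsum s (fun i _ => by positivity) hzsum) (sq_nonneg t)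

lemma tprod_lb : 1 + t ^ 2 * ∑' n, 1 / (z n) ^ 2 ≤ ∏' n, (1 + t ^ 2 / (z n) ^ 2) := by
  have hp := (mult_one_add hzsum t (z := z)).hasProd
  have hs : Filter.Tendsto (fun s : Finset ℕ => 1 + t ^ 2 * ∑ i ∈ s, 1 / z i ^ 2)
      Filter.atTop (nhds (1 + t ^ 2 * ∑' n, 1 / (z n) ^ 2)) :=
    (hzsum.hasSum.const_mul (t ^ 2)).const_add 1
  refine le_of_tendsto_of_tendsto' hs hp fun s => ?_
  calc 1 + t ^ 2 * ∑ i ∈ s, 1 / z i ^ 2 = 1 + ∑ i ∈ s, t ^ 2 / z i ^ 2 := by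
        rw [Finset.mul_sum]; congr 1; exact Finset.sum_congr rfl fun i _ => by ring
    _ ≤ ∏ i ∈ s, (1 + t ^ 2 / z i ^ 2) := fin_lb _ (fun n => by positivity) s

end prodlems

section intlems
variable {Ω : Type*} [MeasureSpace Ω] [IsProbabilityMeasure (ℙ : Measure Ω)]
  {X : Ω → ℝ} (hmeas : Measurable X) {c : ℝ} (hc : 0 < c)
  (hint : Integrable (fun ω => Real.exp (c * (X ω) ^ 2)) ℙ)
include hmeas hc hint

lemma int_exp (t : ℝ) : Integrable (fun ω => Real.exp (t * X ω)) ℙ := by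
  apply Integrable.mono' (hint.const_mul (Real.exp (t ^ 2 / (4 * c))))
  · exact ((Real.continuous_exp.comp (continuous_const.mul continuous_id)).measurable.comp
      hmeas).aestronglyMeasurable
  · filter_upwards with ω
    rw [Real.norm_eq_abs, _root_.abs_of_nonneg (Real.exp_pos _).le, ← Real.exp_add]
    apply Real.exp_le_exp.mpr
    rw [div_add' _ _ _ (by positivity), le_div_iff₀ (by positivity)]
    nlinarith [sq_nonneg (2 * c * X ω - t)]

lemma int_X : Integrable X ℙ := by
  apply Integrable.mono' (hint.const_mul ((c + 1) / c))
  · exact hmeas.aestronglyMeasurable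
  · filter_upwards with ω
    rw [Real.norm_eq_abs, div_mul_eq_mul_div, le_div_iff₀ hc]
    nlinarith [Real.add_one_le_exp (c * X ω ^ 2), Real.one_le_exp (by positivity : (0:ℝ) ≤ c * X ω ^ 2),
      sq_nonneg (|X ω| - 1), _root_.sq_abs (X ω)]

lemma int_bound : Integrable (fun ω => (X ω) ^ 2 * Real.exp |X ω|) ℙ := by
  apply Integrable.mono' (hint.const_mul (2 / c * Real.exp (1 / (2 * c))))
  · apply Measurable.aestronglyMeasurable
    exact ((hmeas.pow_const 2).mul ((Real.continuous_exp.measurable).comp hmeas.abs))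
  · filter_upwards with ω
    set x := X ω
    have h1 : |x| ≤ c / 2 * x ^ 2 + 1 / (2 * c) := by
      rw [show c / 2 * x ^ 2 + 1 / (2 * c) = (c ^ 2 * x ^ 2 + 1) / (2 * c) by
        field_simp, le_div_iff₀ (by positivity)]
      nlinarith [sq_nonneg (c * |x| - 1), _root_.sq_abs x]
    have h2 : x ^ 2 ≤ 2 / c * Real.exp (c / 2 * x ^ 2) := by
      have hu : c / 2 * x ^ 2 ≤ Real.exp (c / 2 * x ^ 2) :=
        (le_add_of_nonneg_right zero_le_one).trans (Real.add_one_le_exp _)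
      rw [show (2:ℝ) / c * Real.exp (c / 2 * x ^ 2) = Real.exp (c / 2 * x ^ 2) * 2 / c by ring,
        le_div_iff₀ hc]
      nlinarith
    have h3 : Real.exp |x| ≤ Real.exp (c / 2 * x ^ 2 + 1 / (2 * c)) := Real.exp_le_exp.mpr h1
    rw [Real.norm_eq_abs, _root_.abs_of_nonneg (by positivity)]
    calc x ^ 2 * Real.exp |x| ≤ (2 / c * Real.exp (c / 2 * x ^ 2)) *
          Real.exp (c / 2 * x ^ 2 + 1 / (2 * c)) :=
        mul_le_mul h2 h3 (Real.exp_pos _).le (by positivity)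
      _ = 2 / c * Real.exp (1 / (2 * c)) * Real.exp (c * x ^ 2) := by
        rw [mul_assoc, ← Real.exp_add, show c / 2 * x ^ 2 + (c / 2 * x ^ 2 + 1 / (2 * c))
          = 1 / (2 * c) + c * x ^ 2 by ring, Real.exp_add, ← mul_assoc]

end intlems

lemma stepA {Ω : Type*} [MeasureSpace Ω] (X : Ω → ℝ) (γ : ℝ)
    {z : ℕ → ℝ} (hzsum : Summable (fun n => 1 / (z n) ^ 2))
    (hfact : ∀ w : ℂ,
      ∫ ω, Complex.exp (Complex.I * w * (X ω : ℂ))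
        = Complex.exp (-(γ : ℂ) * w ^ 2 / 2) * ∏' n : ℕ, (1 - w ^ 2 / ((z n : ℂ)) ^ 2))
    (t : ℝ) :
    ∫ ω, Real.exp (t * X ω)
      = Real.exp (γ * t ^ 2 / 2) * ∏' n : ℕ, (1 + t ^ 2 / (z n) ^ 2) := by
  have h := hfact (-(Complex.I * t))
  have hL : (fun ω => Complex.exp (Complex.I * (-(Complex.I * t)) * (X ω : ℂ)))
      = fun ω => ((Real.exp (t * X ω) : ℝ) : ℂ) := by
    funext ω
    rw [Complex.ofReal_exp, Complex.ofReal_mul]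
    congr 1
    rw [mul_neg, ← mul_assoc, Complex.I_mul_I]
    ring
  rw [hL] at h
  rw [show (∫ ω, ((Real.exp (t * X ω) : ℝ) : ℂ)) = ((∫ ω, Real.exp (t * X ω) : ℝ) : ℂ)
    from integral_ofReal] at h
  have hsq : (-(Complex.I * (t : ℂ))) ^ 2 = -(t : ℂ) ^ 2 := by
    rw [show (-(Complex.I * (t : ℂ))) ^ 2 = Complex.I ^ 2 * t ^ 2 by ring, Complex.I_sq]
    ring
  have hR1 : Complex.exp (-(γ : ℂ) * (-(Complex.I * t)) ^ 2 / 2)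
      = ((Real.exp (γ * t ^ 2 / 2) : ℝ) : ℂ) := by
    rw [Complex.ofReal_exp]
    congr 1
    rw [hsq]
    push_cast
    ring
  have hR2 : (∏' n : ℕ, (1 - (-(Complex.I * t)) ^ 2 / ((z n : ℂ)) ^ 2))
      = ((∏' n : ℕ, (1 + t ^ 2 / (z n) ^ 2) : ℝ) : ℂ) := by
    calc ∏' n : ℕ, (1 - (-(Complex.I * t)) ^ 2 / ((z n : ℂ)) ^ 2)
        = ∏' n : ℕ, Complex.ofRealHom (1 + t ^ 2 / (z n) ^ 2) := by
          refine tprod_congr fun n => ?_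
          rw [show (Complex.ofRealHom (1 + t ^ 2 / (z n) ^ 2) : ℂ)
            = ((1 + t ^ 2 / (z n) ^ 2 : ℝ) : ℂ) from rfl, hsq]
          push_cast
          ring
      _ = Complex.ofRealHom (∏' n : ℕ, (1 + t ^ 2 / (z n) ^ 2)) :=
          ((mult_one_add hzsum t).map_tprod Complex.ofRealHom Complex.continuous_ofReal).symm
      _ = ((∏' n : ℕ, (1 + t ^ 2 / (z n) ^ 2) : ℝ) : ℂ) := rfl
  rw [hR1, hR2, ← Complex.ofReal_mul] at h
  exact_mod_cast h

theorem real_zeros_strictly_subgaussian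
    {Ω : Type*} [MeasureSpace Ω] [IsProbabilityMeasure (ℙ : Measure Ω)]
    (X : Ω → ℝ) (hmeas : Measurable X)
    (hsubg : ∃ c : ℝ, 0 < c ∧ Integrable (fun ω => Real.exp (c * (X ω) ^ 2)) ℙ)
    (hmean : ∫ ω, X ω = 0)
    (σ2 : ℝ) (hσ : σ2 = ∫ ω, (X ω) ^ 2)
    (γ : ℝ) (hγ : 0 ≤ γ)
    (z : ℕ → ℝ) (hz : ∀ n, 0 < z n)
    (hzsum : Summable (fun n => 1 / (z n) ^ 2))
    (hfact : ∀ w : ℂ,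
      ∫ ω, Complex.exp (Complex.I * w * (X ω : ℂ))
        = Complex.exp (-(γ : ℂ) * w ^ 2 / 2) * ∏' n : ℕ, (1 - w ^ 2 / ((z n : ℂ)) ^ 2)) :
    (σ2 / 2 = γ / 2 + ∑' n : ℕ, 1 / (z n) ^ 2) ∧
    (∀ t : ℝ,
      (∫ ω, Real.exp (t * X ω)
          = Real.exp (γ * t ^ 2 / 2) * ∏' n : ℕ, (1 + t ^ 2 / (z n) ^ 2)) ∧
      ∫ ω, Real.exp (t * X ω) ≤ Real.exp (σ2 * t ^ 2 / 2)) := by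
  obtain ⟨c, hc, hint⟩ := hsubg
  have hA : ∀ t : ℝ, ∫ ω, Real.exp (t * X ω)
      = Real.exp (γ * t ^ 2 / 2) * ∏' n : ℕ, (1 + t ^ 2 / (z n) ^ 2) :=
    stepA X γ hzsum hfact
  obtain ⟨S, hSdef⟩ : ∃ S : ℝ, S = ∑' n : ℕ, 1 / (z n) ^ 2 := ⟨_, rfl⟩
  have hSnn : 0 ≤ S := hSdef ▸ tsum_nonneg fun n => by positivity
  obtain ⟨K, hKdef⟩ : ∃ K : ℝ, K = γ / 2 + S := ⟨_, rfl⟩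
  have hKnn : 0 ≤ K := by rw [hKdef]; linarith
  have hne : ∀ᶠ t : ℝ in nhdsWithin 0 {(0:ℝ)}ᶜ, t ≠ 0 := by
    filter_upwards [self_mem_nhdsWithin] with t ht using ht
  have hmem1 : ∀ᶠ t : ℝ in nhdsWithin 0 {(0:ℝ)}ᶜ, |t| ≤ 1 := by
    apply Filter.Eventually.filter_mono nhdsWithin_le_nhds
    filter_upwards [Metric.ball_mem_nhds (0:ℝ) one_pos] with t ht
    rw [Metric.mem_ball, Real.dist_eq, sub_zero] at ht
    exact ht.le
  -- RHS limit
  have hlimR : Filter.Tendsto (fun t : ℝ => ((∫ ω, Real.exp (t * X ω)) - 1) / t ^ 2)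
      (nhdsWithin 0 {(0:ℝ)}ᶜ) (nhds K) := by
    have hupper : Filter.Tendsto (fun t : ℝ => K * Real.exp (t ^ 2 * K))
        (nhdsWithin 0 {(0:ℝ)}ᶜ) (nhds K) := by
      have hcont : Continuous fun t : ℝ => K * Real.exp (t ^ 2 * K) := by continuity
      have h0 := (hcont.tendsto 0).mono_left (nhdsWithin_le_nhds (s := {(0:ℝ)}ᶜ))
      simpa using h0
    apply tendsto_of_tendsto_of_tendsto_of_le_of_le' tendsto_const_nhds hupper
    · -- K ≤ (M t - 1)/t² eventually
      filter_upwards [hne] with t ht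
      have ht2 : (0:ℝ) < t ^ 2 := by positivity
      rw [hA t, le_div_iff₀ ht2]
      have hE : 1 + γ * t ^ 2 / 2 ≤ Real.exp (γ * t ^ 2 / 2) := by
        linarith [Real.add_one_le_exp (γ * t ^ 2 / 2)]
      have hP := tprod_lb hzsum t (z := z)
      rw [← hSdef] at hP
      have hprod : (1 + γ * t ^ 2 / 2) * (1 + t ^ 2 * S)
          ≤ Real.exp (γ * t ^ 2 / 2) * ∏' n : ℕ, (1 + t ^ 2 / (z n) ^ 2) :=
        mul_le_mul hE hP (by positivity) (Real.exp_pos _).le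
      rw [hKdef]
      nlinarith [mul_nonneg (mul_nonneg hγ (sq_nonneg t)) (mul_nonneg (sq_nonneg t) hSnn)]
    · -- (M t - 1)/t² ≤ K exp(t²K) eventually
      filter_upwards [hne] with t ht
      have ht2 : (0:ℝ) < t ^ 2 := by positivity
      rw [hA t, div_le_iff₀ ht2]
      have hub := tprod_ub hzsum t (z := z)
      rw [← hSdef] at hub
      have h1 : Real.exp (γ * t ^ 2 / 2) * ∏' n : ℕ, (1 + t ^ 2 / (z n) ^ 2)
          ≤ Real.exp (t ^ 2 * K) := by
        calc Real.exp (γ * t ^ 2 / 2) * ∏' n : ℕ, (1 + t ^ 2 / (z n) ^ 2)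
            ≤ Real.exp (γ * t ^ 2 / 2) * Real.exp (t ^ 2 * S) :=
              mul_le_mul_of_nonneg_left hub (Real.exp_pos _).le
          _ = Real.exp (t ^ 2 * K) := by rw [← Real.exp_add, hKdef]; congr 1; ring
      have h2 : Real.exp (t ^ 2 * K) - 1 ≤ (t ^ 2 * K) * Real.exp (t ^ 2 * K) :=
        expE3 (by positivity)
      have h3 : t ^ 2 * K * Real.exp (t ^ 2 * K) = K * Real.exp (t ^ 2 * K) * t ^ 2 := by ring
      linarith
  -- LHS limit
  have hlimL : Filter.Tendsto (fun t : ℝ => ((∫ ω, Real.exp (t * X ω)) - 1) / t ^ 2)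
      (nhdsWithin 0 {(0:ℝ)}ᶜ) (nhds (σ2 / 2)) := by
    have hInt1 : ∀ s : ℝ, Integrable (fun ω => Real.exp (s * X ω)) ℙ :=
      fun s => int_exp hmeas hc hint s
    have hIntX : Integrable X ℙ := int_X hmeas hc hint
    have key : Filter.Tendsto (fun t : ℝ => ∫ ω, (Real.exp (t * X ω) - 1 - t * X ω) / t ^ 2)
        (nhdsWithin 0 {(0:ℝ)}ᶜ) (nhds (∫ ω, (X ω) ^ 2 / 2)) := by
      apply tendsto_integral_filter_of_dominated_convergence
        (fun ω => (X ω) ^ 2 * Real.exp |X ω|)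
      · filter_upwards with t
        exact ((((Real.measurable_exp.comp (measurable_const.mul hmeas)).sub
          measurable_const).sub (measurable_const.mul hmeas)).div_const _).aestronglyMeasurable
      · filter_upwards [hmem1] with t ht1
        filter_upwards with ω
        rcases eq_or_ne t 0 with rfl | ht0
        · simp only [zero_mul, Real.exp_zero, sub_self, sub_zero]
          norm_num
          positivity
        · have ht2 : (0:ℝ) < t ^ 2 := by positivity
          rw [Real.norm_eq_abs, abs_div, _root_.abs_of_pos ht2, div_le_iff₀ ht2]
          have hexp : Real.exp |t * X ω| ≤ Real.exp |X ω| := by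
            apply Real.exp_le_exp.mpr
            rw [abs_mul]
            nlinarith [abs_nonneg (X ω)]
          have hmul := mul_le_mul_of_nonneg_left hexp
            (mul_nonneg (sq_nonneg t) (sq_nonneg (X ω)))
          calc |Real.exp (t * X ω) - 1 - t * X ω|
              ≤ (t * X ω) ^ 2 * Real.exp |t * X ω| := expE1 (t * X ω)
            _ ≤ (X ω) ^ 2 * Real.exp |X ω| * t ^ 2 := by rw [mul_pow]; nlinarith [hmul]
      · exact int_bound hmeas hc hint
      · filter_upwards with ω
        rw [← tendsto_sub_nhds_zero_iff]
        have hbd : ∀ᶠ t : ℝ in nhdsWithin 0 {(0:ℝ)}ᶜ,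
            ‖(Real.exp (t * X ω) - 1 - t * X ω) / t ^ 2 - (X ω) ^ 2 / 2‖
              ≤ |t| * (|X ω| ^ 3 * Real.exp |X ω|) := by
          filter_upwards [hmem1, hne] with t ht1 ht0
          have ht2 : (0:ℝ) < t ^ 2 := by positivity
          rw [show (Real.exp (t * X ω) - 1 - t * X ω) / t ^ 2 - (X ω) ^ 2 / 2
            = (Real.exp (t * X ω) - 1 - t * X ω - (t * X ω) ^ 2 / 2) / t ^ 2 by
              field_simp]
          rw [Real.norm_eq_abs, abs_div, _root_.abs_of_pos ht2, div_le_iff₀ ht2]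
          have hexp : Real.exp (|t| * |X ω|) ≤ Real.exp |X ω| := by
            apply Real.exp_le_exp.mpr
            nlinarith [abs_nonneg (X ω)]
          have hmul := mul_le_mul_of_nonneg_left hexp
            (mul_nonneg (pow_nonneg (abs_nonneg t) 3) (pow_nonneg (abs_nonneg (X ω)) 3))
          have h3 : |t| ^ 3 ≤ |t| * t ^ 2 := by
            rw [pow_succ, _root_.sq_abs, mul_comm]
          have h4 := mul_le_mul_of_nonneg_right h3
            (mul_nonneg (pow_nonneg (abs_nonneg (X ω)) 3) (Real.exp_pos |X ω|).le)
          calc |Real.exp (t * X ω) - 1 - t * X ω - (t * X ω) ^ 2 / 2|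
              ≤ |t * X ω| ^ 3 * Real.exp |t * X ω| := expE2 (t * X ω)
            _ ≤ |t| * (|X ω| ^ 3 * Real.exp |X ω|) * t ^ 2 := by
                rw [abs_mul, mul_pow]
                nlinarith [hmul, h4]
        have hg : Filter.Tendsto (fun t : ℝ => |t| * (|X ω| ^ 3 * Real.exp |X ω|))
            (nhdsWithin 0 {(0:ℝ)}ᶜ) (nhds 0) := by
          have hcont : Continuous fun t : ℝ => |t| * (|X ω| ^ 3 * Real.exp |X ω|) :=
            continuous_abs.mul continuous_const
          have h0 := (hcont.tendsto 0).mono_left (nhdsWithin_le_nhds (s := {(0:ℝ)}ᶜ))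
          simpa using h0
        exact squeeze_zero_norm' hbd hg
    have heq : (fun t : ℝ => ∫ ω, (Real.exp (t * X ω) - 1 - t * X ω) / t ^ 2)
        =ᶠ[nhdsWithin 0 {(0:ℝ)}ᶜ]
        (fun t : ℝ => ((∫ ω, Real.exp (t * X ω)) - 1) / t ^ 2) := by
      filter_upwards [hne] with t ht0
      rw [integral_div]
      congr 1
      have hInt2 : Integrable (fun ω => Real.exp (t * X ω) - 1) ℙ := by
        exact (hInt1 t).sub (integrable_const 1)
      have hInt3 : Integrable (fun ω => t * X ω) ℙ := hIntX.const_mul t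
      rw [integral_sub hInt2 hInt3, integral_sub (hInt1 t) (integrable_const 1),
        integral_const, integral_const_mul, hmean]
      simp [measure_univ]
    have hval : (∫ ω, (X ω) ^ 2 / 2) = σ2 / 2 := by rw [integral_div, ← hσ]
    rw [hval] at key
    exact Filter.Tendsto.congr' heq key
  have h1 : σ2 / 2 = K := tendsto_nhds_unique hlimL hlimR
  have hfinal : σ2 / 2 = γ / 2 + ∑' n : ℕ, 1 / (z n) ^ 2 := by rw [h1, hKdef, hSdef]
  refine ⟨hfinal, fun t => ⟨hA t, ?_⟩⟩
  rw [hA t]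
  calc Real.exp (γ * t ^ 2 / 2) * ∏' n : ℕ, (1 + t ^ 2 / (z n) ^ 2)
      ≤ Real.exp (γ * t ^ 2 / 2) * Real.exp (t ^ 2 * ∑' n : ℕ, 1 / (z n) ^ 2) :=
        mul_le_mul_of_nonneg_left (tprod_ub hzsum t) (Real.exp_pos _).le
    _ = Real.exp (σ2 * t ^ 2 / 2) := by
        rw [← Real.exp_add]
        congr 1
        linear_combination (-(t ^ 2)) * hfinal
end
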